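/- arXiv:math/0109103 — 3 statements merged into one kernel-verified Lean document; each statement's English description precedes it below -/
import Mathlib

section
/- Let E be a finite subset of 𝔼, G=(V(E),E), ζ:𝔼→{0,1} any boundary condition, 0<p≤1 and q>0. Then log Z^ζ_{G,p,q} = k_G(ζ¹)·log q + Σ_{e∈E} g^ζ_{G,p,q}(e), where ζ¹ is the configuration obtained from ζ by making every edge in E open. -/
open MeasureTheory Filter Topology ProbabilityTheory

noncomputable section

attribute [local instance] Classical.propDecidable

/-! ### The lattice ℤ³ -/

abbrev V3 := Fin 3 → ℤ
abbrev R3 := Fin 3 → ℝ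

def toR (x : V3) : R3 := fun i => (x i : ℝ)

/-- `L¹` distance on `ℤ³`. -/
def dist1 (x y : V3) : ℤ := ∑ i, |x i - y i|

lemma dist1_comm (x y : V3) : dist1 x y = dist1 y x := by
  simp only [dist1]
  exact Finset.sum_congr rfl fun i _ => abs_sub_comm _ _

abbrev EdgeP := Sym2 V3

def IsLatticeEdge (e : EdgeP) : Prop := ∃ x y : V3, e = s(x, y) ∧ dist1 x y = 1

/-- Configurations: `ω e = true` means that the edge `e` is open. -/
abbrev Config := EdgeP → Bool

/-- `V(E)`: the set of vertices belonging to at least one edge of `E`. -/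
def vertexSet (E : Set EdgeP) : Set V3 := {x | ∃ e ∈ E, x ∈ e}

/-- The graph on `ℤ³` whose edges are the open lattice edges of `ω`. -/
def cfgGraph (ω : Config) : SimpleGraph V3 where
  Adj x y := dist1 x y = 1 ∧ ω s(x, y) = true
  symm := ⟨fun x y h => ⟨by rw [dist1_comm]; exact h.1, by rw [Sym2.eq_swap]; exact h.2⟩⟩
  loopless := ⟨fun x h => by simp [dist1] at h⟩

/-- The number of open components meeting `V(E)`. -/
def kGcount (E : Set EdgeP) (ω : Config) : ℕ :=
  Set.ncard {c : (cfgGraph ω).ConnectedComponent |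
    ∃ x ∈ vertexSet E, (cfgGraph ω).connectedComponentMk x = c}

/-! ### Random-cluster measures -/

def rcWeight (E : Finset EdgeP) (p q : ℝ) (ω : Config) : ℝ :=
  (∏ e ∈ E, if ω e = true then p else 1 - p) * q ^ kGcount (E : Set EdgeP) ω

def extCfg (E : Finset EdgeP) (ζ : Config) (σ : {e // e ∈ E} → Bool) : Config :=
  fun e => if h : e ∈ E then σ ⟨e, h⟩ else ζ e

/-- The partition function `Z^ζ_{G,p,q}`. -/
def Zrc (E : Finset EdgeP) (ζ : Config) (p q : ℝ) : ℝ :=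
  ∑ σ : {e // e ∈ E} → Bool, rcWeight E p q (extCfg E ζ σ)

/-- The random-cluster measure `φ^ζ_{G,p,q}` on configurations. -/
def rcMeasure (E : Finset EdgeP) (ζ : Config) (p q : ℝ) : Measure Config :=
  (ENNReal.ofReal (Zrc E ζ p q))⁻¹ •
    Measure.sum fun σ : {e // e ∈ E} → Bool =>
      ENNReal.ofReal (rcWeight E p q (extCfg E ζ σ)) • Measure.dirac (extCfg E ζ σ)

/-- The all-open (wired) boundary condition. -/
def oneBC : Config := fun _ => true

/-- The function `g^ζ_{G,p,q}(e)`. -/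
def gRC (E : Finset EdgeP) (ζ : Config) (p q : ℝ) (e : EdgeP) : ℝ :=
  ∫ r in p..1, (r - (rcMeasure E ζ r q {ω | ω e = true}).toReal) / (r * (1 - r))

def IsEquatorEdge (e : EdgeP) : Prop :=
  ∃ x y : V3, e = s(x, y) ∧ x 2 = 0 ∧ y 2 = 1 ∧ x 0 = y 0 ∧ x 1 = y 1

/-- The Dobrushin boundary condition `μ`. -/
def dobMu : Config := fun e => if IsEquatorEdge e then false else true

def AgreesOff (E : Set EdgeP) (ζ ω : Config) : Prop := ∀ e ∉ E, ω e = ζ e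


/-! ### Boxes and events -/

/-- The box `Λ_{L,M} = ([-L,L]²×[-M,M]) ∩ ℤ³`. -/
def vbox (L M : ℕ) : Set V3 := {x | |x 0| ≤ (L : ℤ) ∧ |x 1| ≤ (L : ℤ) ∧ |x 2| ≤ (M : ℤ)}

/-- The infinite cylinder `Λ_L = [-L,L]² × ℤ`. -/
def cylV (L : ℕ) : Set V3 := {x | |x 0| ≤ (L : ℤ) ∧ |x 1| ≤ (L : ℤ)}

/-- `E_{L,M}`: edges with at least one endvertex in `Λ_{L,M}`. -/
def edgeBox (L M : ℕ) : Set EdgeP :=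
  {e | IsLatticeEdge e ∧ ∃ x, x ∈ e ∧ x ∈ vbox L M}

/-- `E_L`: edges with at least one endvertex in the cylinder `Λ_L`. -/
def edgeCyl (L : ℕ) : Set EdgeP :=
  {e | IsLatticeEdge e ∧ ∃ x, x ∈ e ∧ x ∈ cylV L}

lemma abs_coord_le_of_dist1 (x y : V3) (h : dist1 x y = 1) (i : Fin 3) :
    |x i - y i| ≤ 1 := by
  have h1 : |x i - y i| ≤ ∑ j, |x j - y j| :=
    Finset.single_le_sum (f := fun j => |x j - y j|) (fun j _ => abs_nonneg _)
      (Finset.mem_univ i)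
  simp only [dist1] at h
  linarith

lemma vbox_finite (L M : ℕ) : (vbox L M).Finite := by
  have h : (Set.univ.pi fun _ : Fin 3 => Set.Icc (-(L + M : ℤ)) (L + M)).Finite :=
    Set.Finite.pi fun _ => Set.finite_Icc _ _
  refine h.subset ?_
  rintro x ⟨h0, h1, h2⟩ i _
  have hi : |x i| ≤ (L + M : ℤ) := by
    fin_cases i
    · refine le_trans h0 ?_; omega
    · refine le_trans h1 ?_; omega
    · refine le_trans h2 ?_; omega
  exact Set.mem_Icc.mpr (abs_le.mp hi)

lemma mem_vbox_succ {L M : ℕ} {x y : V3} (hx : x ∈ vbox L M) (h : dist1 x y = 1) :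
    y ∈ vbox (L + 1) (M + 1) := by
  obtain ⟨h0, h1, h2⟩ := hx
  have k0 := abs_coord_le_of_dist1 x y h 0
  have k1 := abs_coord_le_of_dist1 x y h 1
  have k2 := abs_coord_le_of_dist1 x y h 2
  have e0 : |y 0| - |x 0| ≤ |y 0 - x 0| := abs_sub_abs_le_abs_sub _ _
  have e1 : |y 1| - |x 1| ≤ |y 1 - x 1| := abs_sub_abs_le_abs_sub _ _
  have e2 : |y 2| - |x 2| ≤ |y 2 - x 2| := abs_sub_abs_le_abs_sub _ _
  rw [abs_sub_comm] at e0 e1 e2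
  refine ⟨?_, ?_, ?_⟩ <;> push_cast <;> linarith

lemma vbox_subset_succ (L M : ℕ) : vbox L M ⊆ vbox (L + 1) (M + 1) := by
  rintro x ⟨h0, h1, h2⟩
  refine ⟨?_, ?_, ?_⟩ <;> push_cast <;> linarith

lemma edgeBox_finite (L M : ℕ) : (edgeBox L M).Finite := by
  have h1 : (vbox (L + 1) (M + 1)).Finite := vbox_finite _ _
  have h2 : ((fun p : V3 × V3 => s(p.1, p.2)) ''
      ((vbox (L + 1) (M + 1)) ×ˢ (vbox (L + 1) (M + 1)))).Finite := (h1.prod h1).image _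
  refine h2.subset ?_
  rintro e ⟨⟨x, y, rfl, hd⟩, z, hz, hzbox⟩
  rcases Sym2.mem_iff.mp hz with rfl | rfl
  · exact ⟨(z, y), ⟨vbox_subset_succ _ _ hzbox, mem_vbox_succ hzbox hd⟩, rfl⟩
  · exact ⟨(x, z), ⟨mem_vbox_succ hzbox (by rw [dist1_comm]; exact hd),
      vbox_subset_succ _ _ hzbox⟩, rfl⟩

/-- `E_{L,M}` as a finite set of edges. -/
def edgeBoxF (L M : ℕ) : Finset EdgeP := (edgeBox_finite L M).toFinset

/-- The upper boundary `∂⁺Λ`. -/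
def upBdry (Λ : Set V3) : Set V3 := {x | x ∉ Λ ∧ 0 < x 2 ∧ ∃ z ∈ Λ, dist1 x z = 1}

/-- The lower boundary `∂⁻Λ`. -/
def lowBdry (Λ : Set V3) : Set V3 := {x | x ∉ Λ ∧ x 2 ≤ 0 ∧ ∃ z ∈ Λ, dist1 x z = 1}

/-- The event `I_{L,M}`. -/
def eventI (L M : ℕ) : Set Config :=
  {ω | ¬ ∃ a ∈ upBdry (vbox L M), ∃ b ∈ lowBdry (vbox L M), (cfgGraph ω).Reachable a b}

/-- The event `I_L`. -/
def eventIL (L : ℕ) : Set Config :=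
  {ω | ¬ ∃ a ∈ upBdry (cylV L), ∃ b ∈ lowBdry (cylV L), (cfgGraph ω).Reachable a b}

/-- `Ω^μ_{L,M}`. -/
def OmegaMu (L M : ℕ) : Set Config := {ω | AgreesOff (edgeBox L M) dobMu ω}

/-- `Ω^μ_L`. -/
def OmegaMuL (L : ℕ) : Set Config := {ω | AgreesOff (edgeCyl L) dobMu ω}

/-! ### Translations and similarity of edge sets -/

def trE (t : V3) (e : EdgeP) : EdgeP := Sym2.map (· + t) e

/-- `A ≃ B`: `B` is a translate of `A`. -/
def SimE (A B : Set EdgeP) : Prop := ∃ t : V3, B = trE t '' A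

/-- `e ≃ f`: the edges are parallel (translates of one another). -/
def ParaE (e f : EdgeP) : Prop := ∃ t : V3, trE t e = f

/-- The vertex set `Q_n(e)`. -/
def QnV (n : ℕ) (e : EdgeP) : Set V3 :=
  {z | ∃ x, x ∈ e ∧ ∃ v : V3, (∀ i, |v i| ≤ (n : ℤ)) ∧ z = x + v}

/-- The set of edges of `E` having both endvertices in `S`. -/
def restrictE (E : Set EdgeP) (S : Set V3) : Set EdgeP := {f | f ∈ E ∧ ∀ x ∈ f, x ∈ S}
/-! ### Plaquettes -/

def plqOf (x y : V3) : Set R3 :=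
  {z | ∀ i, (x i = y i → |z i - (x i : ℝ)| ≤ 1 / 2) ∧
            (x i ≠ y i → z i = ((x i : ℝ) + (y i : ℝ)) / 2)}

/-- The plaquette `h(e)` dual to the edge `e`. -/
def dualPlq (e : EdgeP) : Set R3 := {z | ∃ x y : V3, e = s(x, y) ∧ z ∈ plqOf x y}

/-- Membership in `ℍ`, the set of all plaquettes. -/
def IsPlq (P : Set R3) : Prop := ∃ e, IsLatticeEdge e ∧ P = dualPlq e

/-- `0`-connectedness of two (distinct) plaquettes. -/
def ZeroConn (P Q : Set R3) : Prop := P ≠ Q ∧ (P ∩ Q).Nonempty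

/-- `1`-connectedness of two (distinct) plaquettes: the intersection is
homeomorphic to the unit interval. -/
def OneConn (P Q : Set R3) : Prop :=
  P ≠ Q ∧ Nonempty (↥(P ∩ Q) ≃ₜ ↥(Set.Icc (0 : ℝ) 1))

/-- A set `H` of plaquettes is connected under the adjacency relation `r`. -/
def SetConn (r : Set R3 → Set R3 → Prop) (H : Set (Set R3)) : Prop :=
  ∀ P ∈ H, ∀ Q ∈ H, Relation.ReflTransGen (fun a b => a ∈ H ∧ b ∈ H ∧ r a b) P Q

def ez : V3 := fun i => if i = 2 then 1 else 0

/-- The regular interface `δ₀`. -/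
def regI : Set (Set R3) := {P | ∃ x : V3, x 2 = 0 ∧ P = dualPlq s(x, x + ez)}

/-- The plaquettes that are open in `ω` (dual to closed edges). -/
def openPlqs (ω : Config) : Set (Set R3) :=
  {P | ∃ e, IsLatticeEdge e ∧ ω e = false ∧ P = dualPlq e}

/-- `δ₀ \ {h(e) : e ∈ EE}`. -/
def baseI (EE : Set EdgeP) : Set (Set R3) := regI \ {P | ∃ e ∈ EE, P = dualPlq e}

/-- The interface `Δ(ω)`: the maximal `1`-connected set of open plaquettes
containing `δ₀ \ {h(e) : e ∈ EE}`. -/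
def interfaceOf (EE : Set EdgeP) (ω : Config) : Set (Set R3) :=
  {P | P ∈ openPlqs ω ∧ ∃ P₀ ∈ baseI EE,
    Relation.ReflTransGen (fun a b => b ∈ openPlqs ω ∧ OneConn a b) P₀ P}

/-- The set of interfaces `D_{L,M}`. -/
def Dlm (L M : ℕ) : Set (Set (Set R3)) :=
  {δ | ∃ ω, ω ∈ eventI L M ∧ ω ∈ OmegaMu L M ∧ δ = interfaceOf (edgeBox L M) ω}

/-- The set of interfaces `D_L = ∪_{M ≥ 1} D_{L,M}`. -/
def DL (L : ℕ) : Set (Set (Set R3)) := ⋃ M : ℕ, Dlm L (M + 1)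

/-- The extended interface `δ̄`. -/
def extI (δ : Set (Set R3)) : Set (Set R3) :=
  δ ∪ {P | IsPlq P ∧ ∃ Q ∈ δ, OneConn P Q}

/-- A horizontal plaquette (dual to a vertical edge). -/
def IsHoriz (P : Set R3) : Prop := ∃ x : V3, P = dualPlq s(x, x + ez)

/-- The semi-extended interface `δ*`. -/
def semiI (δ : Set (Set R3)) : Set (Set R3) :=
  δ ∪ {P | IsHoriz P ∧ ∃ Q ∈ δ, OneConn P Q}

def projMap (z : R3) : R3 := fun i => if i = 2 then 1 / 2 else z i

/-- The projection `π(h)` of a plaquette onto the regular interface. -/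
def projP (P : Set R3) : Set R3 := projMap '' P

/-- The c-plaquettes of (the semi-extended interface of) `δ`. -/
def cPlqs (δ : Set (Set R3)) : Set (Set R3) :=
  {P | P ∈ semiI δ ∧ IsHoriz P ∧ ∀ Q ∈ semiI δ, projP Q = projP P → Q = P}

/-- The w-plaquettes of `δ`. -/
def wPlqs (δ : Set (Set R3)) : Set (Set R3) := semiI δ \ cPlqs δ

/-- A ceiling: a maximal `0`-connected set of c-plaquettes. -/
def IsCeiling (δ C : Set (Set R3)) : Prop :=
  C.Nonempty ∧ C ⊆ cPlqs δ ∧ SetConn ZeroConn C ∧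
    ∀ C', C ⊆ C' → C' ⊆ cPlqs δ → SetConn ZeroConn C' → C' = C

/-- A wall: a maximal `0`-connected set of w-plaquettes. -/
def IsWall (δ W : Set (Set R3)) : Prop :=
  W.Nonempty ∧ W ⊆ wPlqs δ ∧ SetConn ZeroConn W ∧
    ∀ W', W ⊆ W' → W' ⊆ wPlqs δ → SetConn ZeroConn W' → W' = W

/-- The projection of a wall: projections of its horizontal plaquettes. -/
def projW (W : Set (Set R3)) : Set (Set R3) :=
  {P | ∃ Q ∈ W, IsHoriz Q ∧ P = projP Q}

/-- `|H|`: the number of plaquettes in `H ∩ {h(e) : e ∈ EE}`. -/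
def plqCard (EE : Set EdgeP) (H : Set (Set R3)) : ℕ :=
  Set.ncard {P | P ∈ H ∧ ∃ e ∈ EE, P = dualPlq e}

/-- `E(H)`: the set of (lattice) edges dual to the plaquettes of `H`. -/
def EdgesOf (δ : Set (Set R3)) : Set EdgeP := {e | IsLatticeEdge e ∧ dualPlq e ∈ δ}

/-- The maximal configuration `ω̄_δ` compatible with `δ`. -/
def omax (δ : Set (Set R3)) : Config := fun e => if dualPlq e ∈ δ then false else true

/-- `K_δ`: the number of connected components of `(ℤ³, η(ω̄_δ))`. -/
def Kdelta (δ : Set (Set R3)) : ℕ :=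
  Set.ncard (Set.univ : Set ((cfgGraph (omax δ)).ConnectedComponent))
/-! ### Ceilings, walls, standard walls, groups of walls -/

/-- The `0`-connected component of `h` within the plaquette set `A`. -/
def zeroComp (A : Set (Set R3)) (h : Set R3) : Set (Set R3) :=
  {h' | h' ∈ A ∧ Relation.ReflTransGen (fun a b => a ∈ A ∧ b ∈ A ∧ ZeroConn a b) h h'}

/-- The ceiling `C` has height `s`: its plaquettes lie in the plane `x₃ = s + ½`. -/
def CeilHeight (C : Set (Set R3)) (s : ℤ) : Prop :=
  ∀ P ∈ C, ∀ z ∈ P, z 2 = (s : ℝ) + 1 / 2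

/-- `C` is the base of the wall `W` of `δ`: the ceiling `0`-connected to `W`
whose projection lies in the infinite `0`-connected component of `δ₀ \ π(W)`. -/
def IsBase (δ W C : Set (Set R3)) : Prop :=
  IsCeiling δ C ∧ (∃ P ∈ C, ∃ Q ∈ W, ZeroConn P Q) ∧
    ∀ P ∈ C, (zeroComp (regI \ projW W) (projP P)).Infinite

/-- The altitude of the wall `W` (the height of its base). -/
def Altitude (δ W : Set (Set R3)) (s : ℤ) : Prop := ∃ C, IsBase δ W C ∧ CeilHeight C s

/-- A pair of plaquette sets, as in a (standard) wall `S = (A, B)`. -/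
abbrev WallPair := Set (Set R3) × Set (Set R3)

/-- `δ` witnesses that `(A, B)` is a standard wall: `A ⊆ δ`, `B ⊆ δ* \ δ`,
and `A ∪ B` is the unique wall of `δ`. -/
def StdWallIface (L : ℕ) (A B δ : Set (Set R3)) : Prop :=
  δ ∈ DL L ∧ A ⊆ δ ∧ B ⊆ semiI δ \ δ ∧ IsWall δ (A ∪ B) ∧ ∀ W, IsWall δ W → W = A ∪ B

/-- `(A, B)` is a standard wall. -/
def IsStdWall (L : ℕ) (A B : Set (Set R3)) : Prop := ∃ δ, StdWallIface L A B δ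

/-- An admissible family of standard walls. -/
def AdmFam (L : ℕ) (F : Set WallPair) : Prop :=
  (∀ S ∈ F, IsStdWall L S.1 S.2) ∧
  (∀ S ∈ F, ∀ S' ∈ F, S ≠ S' →
    ∀ h ∈ projW (S.1 ∪ S.2), ∀ h' ∈ projW (S'.1 ∪ S'.2), ¬(h = h' ∨ ZeroConn h h')) ∧
  (∀ S ∈ F, ∀ e : EdgeP, e ∉ edgeCyl L → dualPlq e ∈ S.1 ∪ S.2 →
    (dualPlq e ∈ S.1 ↔ dobMu e = false))

/-- `ρ(h, δ)`: the number of plaquettes of `δ` projecting into `h`. -/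
def rho (h : Set R3) (δ : Set (Set R3)) : ℕ := Set.ncard {P | P ∈ δ ∧ projP P ⊆ h}

/-- The centre of a plaquette. -/
def plqCenter (P : Set R3) : R3 :=
  fun i => (sInf ((fun z => z i) '' P) + sSup ((fun z => z i) '' P)) / 2

/-- The `L^∞` distance `‖h₁, h₂‖` between the centres of two plaquettes. -/
def plqDist (P Q : Set R3) : ℝ := dist (plqCenter P) (plqCenter Q)

/-- Two standard walls are close. -/
def CloseW (L : ℕ) (S T : WallPair) : Prop :=
  ∃ δS δT, StdWallIface L S.1 S.2 δS ∧ StdWallIface L T.1 T.2 δT ∧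
    ∃ h ∈ projW (S.1 ∪ S.2), ∃ h' ∈ projW (T.1 ∪ T.2),
      plqDist h h' < Real.sqrt (rho h δS) + Real.sqrt (rho h' δT)

/-- A group of (standard) walls. -/
def IsGroupW (L : ℕ) (G : Set WallPair) : Prop :=
  AdmFam L G ∧ (∀ S ∈ G, (S.1 ∪ S.2).Nonempty) ∧
    ∀ S ∈ G, ∀ T ∈ G,
      Relation.ReflTransGen (fun a b => a ∈ G ∧ b ∈ G ∧ CloseW L a b) S T

/-- An admissible family of groups of walls. -/
def AdmGFam (L : ℕ) (𝔾 : Set (Set WallPair)) : Prop :=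
  (∀ G ∈ 𝔾, IsGroupW L G) ∧
    ∀ G ∈ 𝔾, ∀ G' ∈ 𝔾, G ≠ G' → ∀ S ∈ G, ∀ T ∈ G', ¬ CloseW L S T

/-- Translation of a plaquette by `t ∈ ℤ³`. -/
def trPlq (t : V3) (P : Set R3) : Set R3 := (fun z => z + toR t) '' P

/-- Translation of a set of plaquettes by `t ∈ ℤ³`. -/
def trSet (t : V3) (H : Set (Set R3)) : Set (Set R3) := trPlq t '' H

/-- The vector `(0, 0, -s)`. -/
def negz (s : ℤ) : V3 := fun i => if i = 2 then -s else 0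

/-- The family of standard walls associated with an interface `δ`:
each wall of `δ` translated to altitude `0`. -/
def famOf (δ : Set (Set R3)) : Set WallPair :=
  {S | ∃ W s, IsWall δ W ∧ Altitude δ W s ∧
      S = (trSet (negz s) (W ∩ δ), trSet (negz s) (W \ δ))}

/-- The family of groups of walls associated with an interface `δ`:
the components of `famOf δ` under closeness. -/
def groupsOf (L : ℕ) (δ : Set (Set R3)) : Set (Set WallPair) :=
  {G | ∃ S₀ ∈ famOf δ, G = {S | S ∈ famOf δ ∧
      Relation.ReflTransGen (fun a b => a ∈ famOf δ ∧ b ∈ famOf δ ∧ CloseW L a b) S₀ S}}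

/-- `h` is the origin of the standard wall `S`, relative to the ordering `ord`
of the plaquettes of `δ₀`. -/
def IsOrigin (ord : Set R3 → ℕ) (S : WallPair) (h : Set R3) : Prop :=
  h ∈ projW (S.1 ∪ S.2) ∧ (∃ h' ∈ regI \ projW (S.1 ∪ S.2), OneConn h h') ∧
    ∀ g ∈ projW (S.1 ∪ S.2), (∃ g' ∈ regI \ projW (S.1 ∪ S.2), OneConn g g') →
      ord h ≤ ord g

/-- `h` is the origin of the group of walls `G`. -/
def IsGOrigin (ord : Set R3 → ℕ) (G : Set WallPair) (h : Set R3) : Prop :=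
  (∃ S ∈ G, IsOrigin ord S h) ∧ ∀ S ∈ G, ∀ g, IsOrigin ord S g → ord h ≤ ord g

/-- `N(S) = |A|`. -/
def NW (S : WallPair) : ℕ := S.1.ncard

/-- `Π(S) = N(S) - |π(S)|`. -/
def PiW (S : WallPair) : ℤ := (NW S : ℤ) - ((projW (S.1 ∪ S.2)).ncard : ℤ)

/-- `Π(G) = Σ_{S ∈ G} Π(S)`. -/
def PiG (G : Set WallPair) : ℤ := ∑ᶠ S ∈ G, PiW S

/-! ### Weak convergence, inside and outside, and displacement -/

/-- Weak convergence of probability measures on the configuration space. -/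
def WeakLim (μs : ℕ → Measure Config) (μ : Measure Config) : Prop :=
  ∀ f : BoundedContinuousFunction Config ℝ,
    Tendsto (fun n => ∫ ω, f ω ∂(μs n)) atTop (𝓝 (∫ ω, f ω ∂μ))

/-- The inside of `T ⊆ ℝ³`. -/
def insR (T : Set R3) : Set R3 :=
  {z | z ∉ T ∧ Bornology.IsBounded (connectedComponentIn Tᶜ z)}

/-- The outside of `T ⊆ ℝ³`. -/
def outR (T : Set R3) : Set R3 :=
  {z | z ∉ T ∧ ¬ Bornology.IsBounded (connectedComponentIn Tᶜ z)}

/-- A splitting set of plaquettes. -/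
def IsSplitting (H : Set (Set R3)) : Prop :=
  H.Finite ∧ (∀ P ∈ H, IsPlq P) ∧ SetConn OneConn H ∧ (insR (⋃₀ H)).Nonempty

/-- `h ↔ ∞`: the plaquette `h ∈ δ₀` is joined to infinity by a `1`-connected
sequence of c-plaquettes of the interface `Δ(ω)` lying in `δ₀`. -/
def HtoInf (L : ℕ) (ω : Config) (h : Set R3) : Prop :=
  ∃ (r : ℕ) (hs : ℕ → Set R3), hs 0 = h ∧ (∀ i < r, OneConn (hs i) (hs (i + 1))) ∧
    (∀ i ≤ r, hs i ∈ regI ∧ hs i ∈ cPlqs (interfaceOf (edgeCyl L) ω)) ∧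
    ∃ e, e ∉ edgeCyl L ∧ hs r = dualPlq e

/-- The displacement `D(x, δ)` of the interface `δ` at `x = (a, b, ½)`. -/
def displ (δ : Set (Set R3)) (a b : ℤ) : ℝ :=
  sSup {r | ∃ d : ℝ, r = |d - 1 / 2| ∧
    (fun i : Fin 3 => if i = 0 then (a : ℝ) else if i = 1 then (b : ℝ) else d) ∈ ⋃₀ δ}

/-! The partition function `Z(r) = ∑_ω ∏_e r^{ω(e)} (1 - r)^{1 - ω(e)} q^{k(ω)}` is a polynomial
in `r`, positive on `[0, 1]`, and `Z(1) = q^{k(ζ¹)}` because only the all-open configuration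
survives at `r = 1`. Differentiating the factor of a single edge `e` gives `∂_e Z` with
`r (1 - r) ∂_e Z = Z (φ_r(J_e) - r)`, so the integrand of `g(e)` is `-∂_e Z / Z`. Summing over `e`
gives `-(log Z)'`, and integrating from `p` to `1` yields `log Z(p) - log Z(1)`. -/

namespace TiltedBernoulli

open Finset

variable {ι : Type*} [Fintype ι] [DecidableEq ι]

def edgeFactor (b : Bool) (r : ℝ) : ℝ := if b then r else 1 - r

def productWeight (σ : ι → Bool) (r : ℝ) : ℝ := ∏ i, edgeFactor (σ i) r

def partitionFn (c : (ι → Bool) → ℝ) (r : ℝ) : ℝ := ∑ σ, productWeight σ r * c σ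

def openMass (c : (ι → Bool) → ℝ) (i : ι) (r : ℝ) : ℝ :=
  ∑ σ, if σ i then productWeight σ r * c σ else 0

def partitionFnDerivTerm (c : (ι → Bool) → ℝ) (i : ι) (r : ℝ) : ℝ :=
  ∑ σ, (∏ j ∈ univ.erase i, edgeFactor (σ j) r) * (if σ i then 1 else -1) * c σ

lemma hasDerivAt_edgeFactor (b : Bool) (r : ℝ) :
    HasDerivAt (edgeFactor b) (if b then 1 else -1) r := by
  cases b
  · exact (hasDerivAt_id' r).const_sub 1
  · exact hasDerivAt_id' r

lemma continuous_edgeFactor (b : Bool) : Continuous (edgeFactor b) :=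
  continuous_iff_continuousAt.2 fun r => (hasDerivAt_edgeFactor b r).continuousAt

lemma edgeFactor_nonneg (b : Bool) {r : ℝ} (h0 : 0 ≤ r) (h1 : r ≤ 1) : 0 ≤ edgeFactor b r := by
  cases b <;> simp only [edgeFactor, Bool.false_eq_true, ↓reduceIte] <;> linarith

lemma productWeight_eq_mul_prod_erase (σ : ι → Bool) (i : ι) (r : ℝ) :
    productWeight σ r = edgeFactor (σ i) r * ∏ j ∈ univ.erase i, edgeFactor (σ j) r :=
  (mul_prod_erase _ _ (mem_univ i)).symm

variable (c : (ι → Bool) → ℝ)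

lemma hasDerivAt_partitionFn (r : ℝ) :
    HasDerivAt (partitionFn c) (∑ i, partitionFnDerivTerm c i r) r := by
  have hσ : ∀ σ : ι → Bool, HasDerivAt (fun r => productWeight σ r * c σ)
      (∑ i, (∏ j ∈ univ.erase i, edgeFactor (σ j) r) * (if σ i then 1 else -1) * c σ) r := by
    intro σ
    have h := (HasDerivAt.fun_finsetProd (u := univ) fun i _ =>
      hasDerivAt_edgeFactor (σ i) r).mul_const (c σ)
    simp only [smul_eq_mul, sum_mul] at h
    exact h
  have h := HasDerivAt.fun_sum (u := univ) fun σ _ => hσ σ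
  rw [sum_comm] at h
  exact h

lemma continuous_partitionFn : Continuous (partitionFn c) :=
  continuous_iff_continuousAt.2 fun r => (hasDerivAt_partitionFn c r).continuousAt

lemma continuous_partitionFnDerivTerm (i : ι) : Continuous (partitionFnDerivTerm c i) :=
  continuous_finsetSum _ fun σ _ =>
    ((continuous_finsetProd _ fun j _ => continuous_edgeFactor (σ j)).mul
      continuous_const).mul continuous_const

lemma mul_partitionFnDerivTerm (i : ι) (r : ℝ) :
    r * (1 - r) * partitionFnDerivTerm c i r = openMass c i r - r * partitionFn c r := by
  simp only [partitionFnDerivTerm, openMass, partitionFn, mul_sum, ← sum_sub_distrib]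
  refine sum_congr rfl fun σ _ => ?_
  rw [productWeight_eq_mul_prod_erase σ i]
  cases σ i <;> simp only [edgeFactor, Bool.false_eq_true, ↓reduceIte] <;> ring

lemma partitionFn_pos (hc : ∀ σ, 0 < c σ) {r : ℝ} (h0 : 0 ≤ r) (h1 : r ≤ 1) :
    0 < partitionFn c r := by
  have hweight : ∀ σ : ι → Bool, 0 ≤ productWeight σ r * c σ := fun σ =>
    mul_nonneg (prod_nonneg fun i _ => edgeFactor_nonneg _ h0 h1) (hc σ).le
  -- all edges open if `r > 0`, all closed if `r = 0`
  refine sum_pos' (fun σ _ => hweight σ) ⟨fun _ => decide (0 < r), mem_univ _, ?_⟩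
  refine mul_pos (prod_pos fun i _ => ?_) (hc _)
  by_cases hr : 0 < r
  · simp only [edgeFactor, hr, decide_true, ↓reduceIte]
  · simp only [edgeFactor, hr, decide_false, Bool.false_eq_true, ↓reduceIte]
    linarith

lemma partitionFn_one : partitionFn c 1 = c fun _ => true := by
  rw [partitionFn, sum_eq_single_of_mem (fun _ => true) (mem_univ _)]
  · simp [productWeight, edgeFactor]
  · intro σ _ hσ
    obtain ⟨i, hi⟩ := Function.ne_iff.mp hσ
    rw [productWeight, prod_eq_zero (mem_univ i) (by simp_all [edgeFactor]), zero_mul]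

variable {c}

lemma integral_edgeTerm_eq (hc : ∀ σ, 0 < c σ) {p : ℝ} (hp0 : 0 ≤ p) (hp1 : p ≤ 1) (i : ι) :
    ∫ r in p..1, (r - openMass c i r / partitionFn c r) / (r * (1 - r))
      = -∫ r in p..1, partitionFnDerivTerm c i r / partitionFn c r := by
  rw [← intervalIntegral.integral_neg]
  refine intervalIntegral.integral_congr_ae ?_
  filter_upwards [Measure.ae_ne volume (1 : ℝ)] with r hr1 hr
  rw [Set.uIoc_of_le hp1] at hr
  have hr0 : 0 < r := hp0.trans_lt hr.1
  have hZ : 0 < partitionFn c r := partitionFn_pos c hc hr0.le hr.2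
  have h1r : 0 < 1 - r := sub_pos.2 (lt_of_le_of_ne hr.2 hr1)
  field_simp
  linear_combination mul_partitionFnDerivTerm c i r

lemma intervalIntegrable_partitionFnDerivTerm_div (hc : ∀ σ, 0 < c σ) {p : ℝ} (hp0 : 0 ≤ p)
    (hp1 : p ≤ 1) (i : ι) :
    IntervalIntegrable (fun r => partitionFnDerivTerm c i r / partitionFn c r) volume p 1 := by
  refine ContinuousOn.intervalIntegrable ?_
  refine (continuous_partitionFnDerivTerm c i).continuousOn.div
    (continuous_partitionFn c).continuousOn fun r hr => ?_
  rw [Set.uIcc_of_le hp1] at hr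
  exact (partitionFn_pos c hc (hp0.trans hr.1) hr.2).ne'

lemma integral_sum_partitionFnDerivTerm_div (hc : ∀ σ, 0 < c σ) {p : ℝ} (hp0 : 0 ≤ p)
    (hp1 : p ≤ 1) :
    ∫ r in p..1, ∑ i, partitionFnDerivTerm c i r / partitionFn c r
      = Real.log (partitionFn c 1) - Real.log (partitionFn c p) := by
  have hint : IntervalIntegrable (fun r => ∑ i, partitionFnDerivTerm c i r / partitionFn c r)
      volume p 1 := by
    simpa only [sum_fn] using IntervalIntegrable.sum univ fun i _ =>
      intervalIntegrable_partitionFnDerivTerm_div hc hp0 hp1 i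
  refine intervalIntegral.integral_eq_sub_of_hasDerivAt
    (f := fun r => Real.log (partitionFn c r)) (fun r hr => ?_) hint
  rw [Set.uIcc_of_le hp1] at hr
  simpa only [sum_div] using
    (hasDerivAt_partitionFn c r).log (partitionFn_pos c hc (hp0.trans hr.1) hr.2).ne'

theorem log_partitionFn_eq (hc : ∀ σ, 0 < c σ) {p : ℝ} (hp0 : 0 ≤ p) (hp1 : p ≤ 1) :
    Real.log (partitionFn c p) = Real.log (c fun _ => true)
      + ∑ i, ∫ r in p..1, (r - openMass c i r / partitionFn c r) / (r * (1 - r)) := by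
  simp only [integral_edgeTerm_eq hc hp0 hp1, sum_neg_distrib]
  rw [← intervalIntegral.integral_finsetSum fun i _ =>
      intervalIntegrable_partitionFnDerivTerm_div hc hp0 hp1 i,
    integral_sum_partitionFnDerivTerm_div hc hp0 hp1, partitionFn_one]
  ring

end TiltedBernoulli

section RandomCluster

open Finset TiltedBernoulli

variable (F : Finset EdgeP) (ζ : Config) (q : ℝ)

def clusterWeight (σ : {e // e ∈ F} → Bool) : ℝ := q ^ kGcount (F : Set EdgeP) (extCfg F ζ σ)

lemma clusterWeight_pos (hq : 0 < q) (σ : {e // e ∈ F} → Bool) : 0 < clusterWeight F ζ q σ :=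
  pow_pos hq _

lemma extCfg_coe (σ : {e // e ∈ F} → Bool) (e : {e // e ∈ F}) : extCfg F ζ σ e = σ e := by
  simp [extCfg, e.prop]

lemma rcWeight_extCfg (r : ℝ) (σ : {e // e ∈ F} → Bool) :
    rcWeight F r q (extCfg F ζ σ) = productWeight σ r * clusterWeight F ζ q σ := by
  rw [rcWeight, ← Finset.prod_coe_sort F]
  simp only [extCfg_coe]
  rfl

lemma Zrc_eq_partitionFn (r : ℝ) : Zrc F ζ r q = partitionFn (clusterWeight F ζ q) r := by
  simp only [Zrc, partitionFn, rcWeight_extCfg]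

lemma rcMeasure_toReal_apply {r : ℝ} (hw : ∀ σ, 0 ≤ rcWeight F r q (extCfg F ζ σ))
    {A : Set Config} (hA : MeasurableSet A) :
    (rcMeasure F ζ r q A).toReal
      = (∑ σ, if extCfg F ζ σ ∈ A then rcWeight F r q (extCfg F ζ σ) else 0) / Zrc F ζ r q := by
  have hval : ∀ σ, 0 ≤ if extCfg F ζ σ ∈ A then rcWeight F r q (extCfg F ζ σ) else 0 :=
    fun σ => by split_ifs <;> simp [hw σ]
  have hterm : ∀ σ, (ENNReal.ofReal (rcWeight F r q (extCfg F ζ σ)) •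
      Measure.dirac (extCfg F ζ σ)) A
        = ENNReal.ofReal (if extCfg F ζ σ ∈ A then rcWeight F r q (extCfg F ζ σ) else 0) :=
    fun σ => by
      rw [Measure.smul_apply, Measure.dirac_apply' _ hA, Set.indicator_apply]
      split_ifs <;> simp
  have hZ : 0 ≤ Zrc F ζ r q := sum_nonneg fun σ _ => hw σ
  rw [rcMeasure, Measure.smul_apply, Measure.sum_apply _ hA, tsum_fintype]
  simp only [hterm]
  rw [← ENNReal.ofReal_sum_of_nonneg fun σ _ => hval σ, smul_eq_mul, ENNReal.toReal_mul,
    ENNReal.toReal_inv, ENNReal.toReal_ofReal hZ,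
    ENNReal.toReal_ofReal (sum_nonneg fun σ _ => hval σ), div_eq_inv_mul]

lemma rcMeasure_open_toReal (hq : 0 < q) {r : ℝ} (h0 : 0 ≤ r) (h1 : r ≤ 1) (e : {e // e ∈ F}) :
    (rcMeasure F ζ r q {ω | ω e = true}).toReal
      = openMass (clusterWeight F ζ q) e r / partitionFn (clusterWeight F ζ q) r := by
  have hA : MeasurableSet {ω : Config | ω e = true} :=
    measurableSet_eq_fun (measurable_pi_apply _) measurable_const
  rw [rcMeasure_toReal_apply F ζ q (fun σ => ?_) hA, Zrc_eq_partitionFn]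
  · simp only [openMass, Set.mem_ofPred_eq, extCfg_coe, rcWeight_extCfg]
  · rw [rcWeight_extCfg]
    exact mul_nonneg (prod_nonneg fun i _ => edgeFactor_nonneg _ h0 h1)
      (clusterWeight_pos F ζ q hq σ).le

end RandomCluster

theorem statement2_general (E : Set EdgeP) (hE : E.Finite)
    (ζ : Config) (p q : ℝ) (hp0 : 0 < p) (hp1 : p ≤ 1) (hq : 0 < q) :
    Real.log (Zrc hE.toFinset ζ p q)
      = (kGcount E (extCfg hE.toFinset ζ fun _ => true) : ℝ) * Real.log q
        + ∑ e ∈ hE.toFinset, gRC hE.toFinset ζ p q e := by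
  set F := hE.toFinset
  have hgRC : ∀ e : {e // e ∈ F}, gRC F ζ p q e = ∫ r in p..1,
      (r - TiltedBernoulli.openMass (clusterWeight F ζ q) e r
        / TiltedBernoulli.partitionFn (clusterWeight F ζ q) r)
        / (r * (1 - r)) := fun e => by
    refine intervalIntegral.integral_congr fun r hr => ?_
    rw [Set.uIcc_of_le hp1] at hr
    simp only [rcMeasure_open_toReal F ζ q hq (hp0.le.trans hr.1) hr.2]
  rw [Zrc_eq_partitionFn,
    TiltedBernoulli.log_partitionFn_eq (clusterWeight_pos F ζ q hq) hp0.le hp1,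
    ← Finset.sum_coe_sort F, clusterWeight, Real.log_pow, hE.coe_toFinset]
  simp only [hgRC]

/-- the logarithm of the partition function in terms of edge densities. -/
theorem statement2 (E : Set EdgeP) (hE : E.Finite) (hEdge : ∀ e ∈ E, IsLatticeEdge e)
    (ζ : Config) (p q : ℝ) (hp0 : 0 < p) (hp1 : p ≤ 1) (hq : 0 < q) :
    Real.log (Zrc hE.toFinset ζ p q)
      = (kGcount E (extCfg hE.toFinset ζ fun _ => true) : ℝ) * Real.log q
        + ∑ e ∈ hE.toFinset, gRC hE.toFinset ζ p q e :=
  statement2_general E hE ζ p q hp0 hp1 hq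

end
end

section
/- For all L,M≥1, the event I_{L,M}∩Ω^μ_{L,M} is exactly the set of all configurations ω∈Ω^μ_{L,M} for which there exists δ∈D_{L,M} such that ω(e)=0 whenever h(e)∈δ. -/
open MeasureTheory Filter Topology ProbabilityTheory

noncomputable section

attribute [local instance] Classical.propDecidable

/-!
`⊆`: the interface `Δ(ω)` of `ω ∈ I_{L,M} ∩ Ω^μ_{L,M}` lies in `D_{L,M}` and consists of
plaquettes that are open in `ω`.

`⊇`: let `δ = Δ(ζ)` and suppose `ω` closes every edge dual to `δ` but joins `a ∈ ∂⁺Λ` to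
`b ∈ ∂⁻Λ` by an open path. Let `T` be the open cluster of `a` in `ζ` and `O` the lattice
component of `b` in the complement of `T`; the path uses an edge `uv` with `u ∉ O`, `v ∈ O`.
Edges from `Oᶜ` to `O` ("crossing edges") are closed in `ζ`, and two crossing edges on a common
unit square have `1`-connected duals. Hence the `ZMod 2` cochain that is `1` on crossing edges
with dual in `δ` sums to `0` around every unit square; it is therefore the coboundary of a
potential on `ℤ³`, which is constant along paths inside `T` and inside `O`. Comparing `uv` with
a crossing edge whose dual lies in `δ₀` far outside `Λ_{L,M}` shows that the dual of `uv` lies in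
`δ`, so `uv` is closed in `ω`: a contradiction.
-/

section Potential

variable {G : Type*} [AddCommGroup G]

theorem exists_forall_add_one_eq_add (f : ℤ → G) :
    ∃ F : ℤ → G, ∀ t, F (t + 1) = F t + f t := by
  refine ⟨fun t => ∑ k ∈ Finset.Ico 0 t, f k - ∑ k ∈ Finset.Ico t 0, f k, fun t => ?_⟩
  dsimp only
  rcases le_or_gt 0 t with ht | ht
  · rw [← Finset.insert_Ico_right_eq_Ico_add_one ht, Finset.sum_insert (by simp),
      Finset.Ico_eq_empty_of_le ht, Finset.Ico_eq_empty_of_le (by omega : 0 ≤ t + 1)]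
    simp [add_comm]
  · rw [← Finset.insert_Ico_add_one_left_eq_Ico ht, Finset.sum_insert (by simp),
      Finset.Ico_eq_empty_of_le ht.le, Finset.Ico_eq_empty_of_le (by omega : t + 1 ≤ 0)]
    simp

theorem exists_potential_of_closed {n : ℕ} (d : Fin n → (Fin n → ℤ) → G)
    (hd : ∀ i j x, d i x + d j (x + Pi.single i 1) = d j x + d i (x + Pi.single j 1)) :
    ∃ g : (Fin n → ℤ) → G, ∀ i x, g (x + Pi.single i 1) = g x + d i x := by
  induction n with
  | zero => exact ⟨0, fun i => i.elim0⟩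
  | succ n ih =>
    have cons_add_zero : ∀ (t : ℤ) y, (Fin.cons t y : Fin (n + 1) → ℤ) + Pi.single 0 1 =
        Fin.cons (t + 1) y := by
      intro t y; ext k; refine Fin.cases ?_ (fun k => ?_) k <;> simp
    have cons_add_succ : ∀ (t : ℤ) y (i : Fin n), (Fin.cons t y : Fin (n + 1) → ℤ) +
        Pi.single i.succ 1 = Fin.cons t (y + Pi.single i 1) := by
      intro t y i; ext k; refine Fin.cases ?_ (fun k => ?_) k <;> simp [Pi.single_apply]
    obtain ⟨g', hg'⟩ := ih (fun i y => d i.succ (Fin.cons 0 y)) fun i j y => by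
      simpa only [cons_add_succ] using hd i.succ j.succ (Fin.cons 0 y)
    choose F hF using fun y => exists_forall_add_one_eq_add fun t => d 0 (Fin.cons t y)
    refine ⟨fun x => g' (Fin.tail x) + F (Fin.tail x) (x 0) - F (Fin.tail x) 0, fun i x => ?_⟩
    rw [← Fin.cons_self_tail x]
    refine Fin.cases ?_ (fun i => ?_) i
    · simp only [cons_add_zero, Fin.tail_cons, Fin.cons_zero, hF]
      abel
    · simp only [cons_add_succ, Fin.tail_cons, Fin.cons_zero]
      set y := Fin.tail x
      -- By closedness the defect of the identity is `1`-periodic in the first coordinate,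
      -- and it vanishes at `0` by the choice of `g'`.
      have hper : Function.Periodic (fun t : ℤ => g' (y + Pi.single i 1) +
          F (y + Pi.single i 1) t - F (y + Pi.single i 1) 0 - (g' y + F y t - F y 0) -
          d i.succ (Fin.cons t y)) 1 := fun t => by
        have h := hd 0 i.succ (Fin.cons t y)
        rw [cons_add_zero, cons_add_succ] at h
        simp only [hF]
        linear_combination (norm := abel) -h
      have key := hper.int_mul_eq (x 0)
      simp only [Int.cast_id, mul_one] at key
      rw [hg'] at key ⊢
      linear_combination (norm := abel) key

end Potential

theorem sum_mul_eq_zero_of_const_on_support {ι : Type*} [Fintype ι] {b κ : ι → ZMod 2}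
    (hb : ∑ k, b k = 0) (hκ : ∀ k l, b k = 1 → b l = 1 → κ k = κ l) :
    ∑ k, b k * κ k = 0 := by
  have eq_zero_of_ne_one : ∀ a : ZMod 2, a ≠ 1 → a = 0 := by decide
  by_cases h : ∃ k₀, b k₀ = 1
  · obtain ⟨k₀, hk₀⟩ := h
    have hterm : ∀ k, b k * κ k = b k * κ k₀ := fun k => by
      by_cases hk : b k = 1
      · rw [hκ k k₀ hk hk₀]
      · rw [eq_zero_of_ne_one _ hk, zero_mul, zero_mul]
    simp only [hterm, ← Finset.sum_mul, hb, zero_mul]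
  · push Not at h
    simp [eq_zero_of_ne_one _ (h _)]

theorem Relation.ReflTransGen.symm_of_symmetric {α : Type*} {r : α → α → Prop}
    (hr : ∀ a b, r a b → r b a) {a b : α} (h : Relation.ReflTransGen r a b) :
    Relation.ReflTransGen r b a :=
  Relation.reflTransGen_swap.1 (Relation.ReflTransGen.mono hr _ _ h)

theorem fin3_eq_or_eq_or_eq {i j m : Fin 3} (hij : i ≠ j) (hmi : m ≠ i) (hmj : m ≠ j)
    (k : Fin 3) : k = i ∨ k = j ∨ k = m := by
  revert i j m k; decide

theorem forall_fin3_iff {i j m : Fin 3} (hij : i ≠ j) (hmi : m ≠ i) (hmj : m ≠ j)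
    {P : Fin 3 → Prop} : (∀ k, P k) ↔ P i ∧ P j ∧ P m := by
  refine ⟨fun h => ⟨h i, h j, h m⟩, fun ⟨hi, hj, hm⟩ k => ?_⟩
  rcases fin3_eq_or_eq_or_eq hij hmi hmj k with rfl | rfl | rfl <;> assumption

theorem nonempty_homeomorph_Icc_add_single {ι : Type*} [DecidableEq ι] (a : ι → ℝ) (m : ι) :
    Nonempty (Set.Icc a (a + Pi.single m 1) ≃ₜ Set.Icc (0 : ℝ) 1) := by
  let φ : Set.Icc (0 : ℝ) 1 → Set.Icc a (a + Pi.single m 1) := fun t =>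
    ⟨a + (t : ℝ) • Pi.single m 1, fun k => by
      by_cases hk : k = m <;> simp [hk, t.2.1], fun k => by
      by_cases hk : k = m <;> simp [hk, t.2.2]⟩
  have hinj : Function.Injective φ := fun s t hst => by
    have := congrArg (fun z : Set.Icc a (a + Pi.single m 1) => (z : ι → ℝ) m) hst
    exact Subtype.ext (by simpa [φ] using this)
  have hsurj : Function.Surjective φ := fun z => by
    have h1 := z.2.1 m
    have h2 : z.1 m ≤ a m + 1 := by simpa using z.2.2 m
    refine ⟨⟨z.1 m - a m, by linarith, by linarith⟩, ?_⟩
    ext k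
    by_cases hk : k = m
    · subst hk; simp [φ]
    · simp [φ, hk]
      exact le_antisymm (by simpa [hk] using z.2.2 k) (z.2.1 k) |>.symm
  exact ⟨(Continuous.homeoOfEquivCompactToT2 (f := Equiv.ofBijective φ ⟨hinj, hsurj⟩)
    (show Continuous φ by fun_prop)).symm⟩

section Lattice

theorem dist1_add_single (x : V3) (i : Fin 3) : dist1 x (x + Pi.single i 1) = 1 := by
  simp [dist1, Pi.single_apply, apply_ite]

theorem dist1_update_update_add_one (x : V3) (i : Fin 3) (s : ℤ) :
    dist1 (Function.update x i s) (Function.update x i (s + 1)) = 1 := by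
  have h : Function.update x i (s + 1) = Function.update x i s + Pi.single i 1 := by
    ext k; by_cases hk : k = i <;> simp [hk]
  rw [h]
  exact dist1_add_single _ _

theorem isLatticeEdge_add_single (x : V3) (i : Fin 3) :
    IsLatticeEdge s(x, x + Pi.single i 1) :=
  ⟨x, _, rfl, dist1_add_single x i⟩

theorem exists_eq_add_single_of_dist1_eq_one {x y : V3} (h : dist1 x y = 1) :
    ∃ i, y = x + Pi.single i 1 ∨ x = y + Pi.single i 1 := by
  simp only [dist1, Fin.sum_univ_three] at h
  have key : ∀ i : Fin 3, (y i = x i + 1 ∨ x i = y i + 1) → (∀ j, j ≠ i → x j = y j) →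
      ∃ i, y = x + Pi.single i 1 ∨ x = y + Pi.single i 1 := by
    intro i hi hj
    refine ⟨i, hi.imp (fun h => ?_) (fun h => ?_)⟩ <;> ext j <;>
      by_cases hji : j = i <;> simp_all
  have hcases : (y 0 = x 0 + 1 ∨ x 0 = y 0 + 1) ∧ x 1 = y 1 ∧ x 2 = y 2 ∨
      x 0 = y 0 ∧ (y 1 = x 1 + 1 ∨ x 1 = y 1 + 1) ∧ x 2 = y 2 ∨
      x 0 = y 0 ∧ x 1 = y 1 ∧ (y 2 = x 2 + 1 ∨ x 2 = y 2 + 1) := by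
    rcases abs_cases (x 0 - y 0) with h0 | h0 <;> rcases abs_cases (x 1 - y 1) with h1 | h1 <;>
      rcases abs_cases (x 2 - y 2) with h2 | h2 <;> omega
  rcases hcases with ⟨hi, h1, h2⟩ | ⟨h0, hi, h2⟩ | ⟨h0, h1, hi⟩
  · exact key 0 hi fun j hj => by fin_cases j <;> simp_all
  · exact key 1 hi fun j hj => by fin_cases j <;> simp_all
  · exact key 2 hi fun j hj => by fin_cases j <;> simp_all

theorem exists_eq_add_single_of_isLatticeEdge {e : EdgeP} (he : IsLatticeEdge e) :
    ∃ x i, e = s(x, x + Pi.single i 1) := by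
  obtain ⟨x, y, rfl, hxy⟩ := he
  obtain ⟨i, rfl | rfl⟩ := exists_eq_add_single_of_dist1_eq_one hxy
  · exact ⟨x, i, rfl⟩
  · exact ⟨y, i, Sym2.eq_swap⟩

theorem ez_eq_single : ez = Pi.single 2 1 := by
  ext k; fin_cases k <;> simp [ez]

def unitSquare (x : V3) (i j : Fin 3) : Set EdgeP :=
  {s(x, x + Pi.single i 1), s(x + Pi.single i 1, x + Pi.single i 1 + Pi.single j 1),
    s(x + Pi.single j 1, x + Pi.single j 1 + Pi.single i 1), s(x, x + Pi.single j 1)}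

theorem isLatticeEdge_of_mem_unitSquare {x : V3} {i j : Fin 3} {e : EdgeP}
    (he : e ∈ unitSquare x i j) : IsLatticeEdge e := by
  simp only [unitSquare, Set.mem_insert_iff, Set.mem_singleton_iff] at he
  rcases he with rfl | rfl | rfl | rfl <;> exact isLatticeEdge_add_single _ _

end Lattice

section Plaquettes

theorem plqOf_comm (x y : V3) : plqOf x y = plqOf y x := by
  ext z
  refine forall_congr' fun i => ?_
  by_cases h : x i = y i <;> simp [h, Ne.symm, add_comm]

theorem dualPlq_mk (x y : V3) : dualPlq s(x, y) = plqOf x y := by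
  ext z
  constructor
  · rintro ⟨a, b, hab, hz⟩
    rcases Sym2.eq_iff.mp hab with ⟨rfl, rfl⟩ | ⟨rfl, rfl⟩
    · exact hz
    · rwa [plqOf_comm]
  · exact fun hz => ⟨x, y, rfl, hz⟩

theorem dualPlq_add_single (x : V3) (i : Fin 3) :
    dualPlq s(x, x + Pi.single i 1) =
      Set.Icc (fun k => (x k : ℝ) - 1 / 2 + (Pi.single i 1 : R3) k)
        (fun k => (x k : ℝ) + 1 / 2) := by
  rw [dualPlq_mk]
  ext z
  simp only [plqOf, Set.mem_ofPred_eq, Set.mem_Icc, Pi.le_def, ← forall_and]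
  refine forall_congr' fun k => ?_
  by_cases hk : k = i
  · subst hk
    simp only [Pi.add_apply, Pi.single_eq_same]
    constructor
    · intro h; have := h.2 (by omega); constructor <;> push_cast at this ⊢ <;> linarith
    · intro h; exact ⟨fun h' => by omega, fun _ => by push_cast; linarith [h.1, h.2]⟩
  · simp only [Pi.add_apply, Pi.single_eq_of_ne hk, add_zero, ne_eq, not_true, abs_le,
      IsEmpty.forall_iff, true_implies, and_true]
    constructor <;> intro h <;> constructor <;> linarith [h.1, h.2]

theorem mem_dualPlq_add_single {y : V3} {k l m : Fin 3} (hkl : k ≠ l) (hmk : m ≠ k)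
    (hml : m ≠ l) {z : R3} :
    z ∈ dualPlq s(y, y + Pi.single k 1) ↔
      z k = y k + 1 / 2 ∧ |z l - y l| ≤ 1 / 2 ∧ |z m - y m| ≤ 1 / 2 := by
  rw [dualPlq_add_single, Set.mem_Icc, Pi.le_def, Pi.le_def, ← forall_and,
    forall_fin3_iff hkl hmk hml]
  simp only [Pi.single_eq_same, Pi.single_eq_of_ne hkl.symm, Pi.single_eq_of_ne hmk, abs_le]
  constructor
  · rintro ⟨⟨h1, h2⟩, ⟨h3, h4⟩, h5, h6⟩
    exact ⟨by linarith, ⟨by linarith, by linarith⟩, by linarith, by linarith⟩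
  · rintro ⟨h1, ⟨h3, h4⟩, h5, h6⟩
    exact ⟨⟨by linarith, by linarith⟩, ⟨by linarith, by linarith⟩, by linarith, by linarith⟩

theorem dualPlq_injOn : Set.InjOn dualPlq {e | IsLatticeEdge e} := by
  intro e he f hf hef
  obtain ⟨x, i, rfl⟩ := exists_eq_add_single_of_isLatticeEdge he
  obtain ⟨y, j, rfl⟩ := exists_eq_add_single_of_isLatticeEdge hf
  rw [dualPlq_add_single, dualPlq_add_single, Set.Icc_eq_Icc_iff] at hef
  · obtain ⟨hlo, hhi⟩ := hef
    have hxy : x = y := funext fun k => by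
      have := congrFun hhi k
      simp only [add_left_inj, Int.cast_inj] at this
      exact this
    subst hxy
    have hij := congrFun hlo i
    by_cases h : i = j
    · rw [h]
    · simp [h] at hij
  · intro k; by_cases hk : k = i <;> simp [hk] <;> linarith

theorem dualPlq_inter_dualPlq_of_mem_unitSquare {x : V3} {i j m : Fin 3} (hij : i ≠ j)
    (hmi : m ≠ i) (hmj : m ≠ j) {e f : EdgeP} (he : e ∈ unitSquare x i j)
    (hf : f ∈ unitSquare x i j) (hef : e ≠ f) :
    dualPlq e ∩ dualPlq f =
      {z : R3 | z i = x i + 1 / 2 ∧ z j = x j + 1 / 2 ∧ |z m - x m| ≤ 1 / 2} := by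
  have hA : ∀ z, z ∈ dualPlq s(x, x + Pi.single i 1) ↔
      z i = x i + 1 / 2 ∧ |z j - x j| ≤ 1 / 2 ∧ |z m - x m| ≤ 1 / 2 :=
    fun z => mem_dualPlq_add_single hij hmi hmj
  have hB : ∀ z, z ∈ dualPlq s(x + Pi.single j 1, x + Pi.single j 1 + Pi.single i 1) ↔
      z i = x i + 1 / 2 ∧ |z j - (x j + 1)| ≤ 1 / 2 ∧ |z m - x m| ≤ 1 / 2 := fun z => by
    rw [mem_dualPlq_add_single hij hmi hmj]
    simp [hij, hmj]
  have hC : ∀ z, z ∈ dualPlq s(x, x + Pi.single j 1) ↔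
      z j = x j + 1 / 2 ∧ |z i - x i| ≤ 1 / 2 ∧ |z m - x m| ≤ 1 / 2 :=
    fun z => mem_dualPlq_add_single hij.symm hmj hmi
  have hD : ∀ z, z ∈ dualPlq s(x + Pi.single i 1, x + Pi.single i 1 + Pi.single j 1) ↔
      z j = x j + 1 / 2 ∧ |z i - (x i + 1)| ≤ 1 / 2 ∧ |z m - x m| ≤ 1 / 2 := fun z => by
    rw [mem_dualPlq_add_single hij.symm hmj hmi]
    simp [hij.symm, hmi]
  simp only [unitSquare, Set.mem_insert_iff, Set.mem_singleton_iff] at he hf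
  ext z
  simp only [Set.mem_inter_iff, Set.mem_ofPred_eq]
  rcases he with rfl | rfl | rfl | rfl <;> rcases hf with rfl | rfl | rfl | rfl <;>
    first | exact absurd rfl hef | skip
  all_goals
    simp only [hA, hB, hC, hD, abs_le]
    constructor
    · rintro ⟨⟨h1, h2, h3⟩, h4, h5, h6⟩
      refine ⟨?_, ?_, h3⟩ <;> linarith
    · rintro ⟨h1, h2, h3, h4⟩
      refine ⟨⟨?_, ⟨?_, ?_⟩, ?_, ?_⟩, ?_, ⟨?_, ?_⟩, ?_, ?_⟩ <;> linarith

theorem oneConn_dualPlq_of_mem_unitSquare {x : V3} {i j : Fin 3} (hij : i ≠ j) {e f : EdgeP}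
    (he : e ∈ unitSquare x i j) (hf : f ∈ unitSquare x i j) (hef : e ≠ f) :
    OneConn (dualPlq e) (dualPlq f) := by
  obtain ⟨m, hmi, hmj⟩ := (by decide : ∀ i j : Fin 3, ∃ m, m ≠ i ∧ m ≠ j) i j
  refine ⟨fun h => hef (dualPlq_injOn (isLatticeEdge_of_mem_unitSquare he)
    (isLatticeEdge_of_mem_unitSquare hf) h), ?_⟩
  set a : R3 := fun k => (x k : ℝ) - 1 / 2 + (Pi.single i 1 : R3) k + (Pi.single j 1 : R3) k
  have hseg : dualPlq e ∩ dualPlq f = Set.Icc a (a + Pi.single m 1) := by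
    rw [dualPlq_inter_dualPlq_of_mem_unitSquare hij hmi hmj he hf hef]
    ext z
    simp only [Set.mem_ofPred_eq, Set.mem_Icc, Pi.le_def, forall_fin3_iff hij hmi hmj, a,
      Pi.add_apply, Pi.single_eq_same, Pi.single_eq_of_ne hij, Pi.single_eq_of_ne hij.symm,
      Pi.single_eq_of_ne hmi, Pi.single_eq_of_ne hmj, Pi.single_eq_of_ne hmi.symm,
      Pi.single_eq_of_ne hmj.symm, abs_le]
    constructor
    · rintro ⟨h1, h2, h3, h4⟩
      refine ⟨⟨?_, ?_, ?_⟩, ?_, ?_, ?_⟩ <;> linarith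
    · rintro ⟨⟨h1, h2, h3⟩, h4, h5, h6⟩
      refine ⟨?_, ?_, ?_, ?_⟩ <;> linarith
  rw [hseg]
  exact nonempty_homeomorph_Icc_add_single a m

end Plaquettes

def IsCrossing (O : Set V3) (e : EdgeP) : Prop :=
  ∃ x y, e = s(x, y) ∧ dist1 x y = 1 ∧ x ∉ O ∧ y ∈ O

def SameSide (O : Set V3) (x y : V3) : Prop := dist1 x y = 1 ∧ (x ∈ O ↔ y ∈ O)

theorem SameSide.symm {O : Set V3} {x y : V3} (h : SameSide O x y) : SameSide O y x :=
  ⟨by rw [dist1_comm]; exact h.1, h.2.symm⟩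

section Crossing

variable (O : Set V3) (K : Set EdgeP)

def crossingCochain (x y : V3) : ZMod 2 :=
  (O.indicator 1 x + O.indicator 1 y) * K.indicator 1 s(x, y)

variable {O K}

theorem crossingCochain_comm (x y : V3) :
    crossingCochain O K x y = crossingCochain O K y x := by
  rw [crossingCochain, crossingCochain, add_comm, Sym2.eq_swap]

theorem isCrossing_of_indicator_add_eq_one {x y : V3} (hxy : dist1 x y = 1)
    (h : O.indicator 1 x + O.indicator 1 y = (1 : ZMod 2)) : IsCrossing O s(x, y) := by
  by_cases hx : x ∈ O <;> by_cases hy : y ∈ O <;>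
    simp_all [Set.indicator_of_mem, Set.indicator_of_notMem]
  · exact ⟨y, x, Sym2.eq_swap, by rw [dist1_comm]; exact hxy, hy, hx⟩
  · exact ⟨x, y, rfl, hxy, hx, hy⟩

variable (hK : ∀ x i j, i ≠ j → ∀ e ∈ unitSquare x i j, ∀ f ∈ unitSquare x i j,
  IsCrossing O f → e ∈ K → f ∈ K)
include hK

theorem crossingCochain_square (x : V3) {i j : Fin 3} (hij : i ≠ j) :
    crossingCochain O K x (x + Pi.single i 1) +
      crossingCochain O K (x + Pi.single i 1) (x + Pi.single i 1 + Pi.single j 1) +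
      crossingCochain O K (x + Pi.single j 1) (x + Pi.single j 1 + Pi.single i 1) +
      crossingCochain O K x (x + Pi.single j 1) = 0 := by
  set E : Fin 4 → V3 × V3 := ![(x, x + Pi.single i 1),
    (x + Pi.single i 1, x + Pi.single i 1 + Pi.single j 1),
    (x + Pi.single j 1, x + Pi.single j 1 + Pi.single i 1), (x, x + Pi.single j 1)]
  have hE : ∀ k, s((E k).1, (E k).2) ∈ unitSquare x i j ∧ dist1 (E k).1 (E k).2 = 1 := by
    intro k; fin_cases k <;> simp [E, unitSquare, dist1_add_single]
  have key := sum_mul_eq_zero_of_const_on_support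
    (b := fun k => O.indicator 1 (E k).1 + O.indicator 1 (E k).2)
    (κ := fun k => K.indicator (1 : EdgeP → ZMod 2) s((E k).1, (E k).2)) ?_ ?_
  · simpa [Fin.sum_univ_four, crossingCochain, E] using key
  · simp only [Fin.sum_univ_four, E, Matrix.cons_val, add_right_comm x (Pi.single j 1)]
    grind
  · intro k l hk hl
    have hkl := hK x i j hij _ (hE k).1 _ (hE l).1
      (isCrossing_of_indicator_add_eq_one (hE l).2 hl)
    have hlk := hK x i j hij _ (hE l).1 _ (hE k).1
      (isCrossing_of_indicator_add_eq_one (hE k).2 hk)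
    by_cases h : s((E k).1, (E k).2) ∈ K
    · simp [Set.indicator_of_mem h, Set.indicator_of_mem (hkl h)]
    · simp [Set.indicator_of_notMem h, Set.indicator_of_notMem (mt hlk h)]

theorem exists_potential_crossingCochain :
    ∃ g : V3 → ZMod 2, ∀ x y, dist1 x y = 1 → g y = g x + crossingCochain O K x y := by
  obtain ⟨g, hg⟩ := exists_potential_of_closed
    (fun i x => crossingCochain O K x (x + Pi.single i 1)) fun i j x => by
      rcases eq_or_ne i j with rfl | hij
      · rfl
      · have h := crossingCochain_square hK x hij
        rw [add_right_comm x (Pi.single j 1)] at h ⊢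
        grind
  refine ⟨g, fun x y hxy => ?_⟩
  obtain ⟨i, rfl | rfl⟩ := exists_eq_add_single_of_dist1_eq_one hxy
  · exact hg i x
  · rw [hg i y, crossingCochain_comm, add_assoc, CharTwo.add_self_eq_zero, add_zero]

theorem mem_iff_mem_of_sameSide {p q u v : V3} (hp : p ∉ O) (hq : q ∈ O)
    (hpq : dist1 p q = 1) (huv : dist1 u v = 1)
    (hup : Relation.ReflTransGen (SameSide O) u p)
    (hvq : Relation.ReflTransGen (SameSide O) v q) :
    s(u, v) ∈ K ↔ s(p, q) ∈ K := by
  -- A potential of the cochain is constant along paths that do not cross the boundary of `O`,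
  -- and increases by the `K`-indicator across a crossing edge.
  obtain ⟨g, hg⟩ := exists_potential_crossingCochain hK
  have hconst : ∀ {a b}, Relation.ReflTransGen (SameSide O) a b →
      g a = g b ∧ (a ∈ O ↔ b ∈ O) := by
    intro a b h
    induction h with
    | refl => exact ⟨rfl, Iff.rfl⟩
    | @tail b c _ hbc ih =>
      refine ⟨?_, ih.2.trans hbc.2⟩
      rw [ih.1, hg _ _ hbc.1, crossingCochain]
      have hind : O.indicator (1 : V3 → ZMod 2) c = O.indicator 1 b := by
        by_cases hb : b ∈ O
        · simp [hb, hbc.2.mp hb]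
        · simp [hb, mt hbc.2.mpr hb]
      rw [hind, CharTwo.add_self_eq_zero, zero_mul, add_zero]
  obtain ⟨hgu, hu⟩ := hconst hup
  obtain ⟨hgv, hv⟩ := hconst hvq
  have hcross : ∀ {a b}, a ∉ O → b ∈ O →
      crossingCochain O K a b = K.indicator 1 s(a, b) := fun ha hb => by
    simp [crossingCochain, ha, hb]
  have hκ : K.indicator (1 : EdgeP → ZMod 2) s(u, v) = K.indicator 1 s(p, q) := by
    have h := hg u v huv
    rw [hgu, hgv, hg p q hpq, hcross hp hq, hcross (mt hu.mp hp) (hv.mpr hq)] at h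
    exact (add_left_cancel h).symm
  constructor <;> intro h <;> by_contra h' <;> simp [h, h'] at hκ

end Crossing

def complComponent (T : Set V3) (b : V3) : Set V3 :=
  {w | Relation.ReflTransGen (fun x y => dist1 x y = 1 ∧ y ∉ T) b w}

section ComplComponent

variable {T : Set V3} {b : V3}

theorem not_mem_of_mem_complComponent (hb : b ∉ T) {w : V3}
    (hw : w ∈ complComponent T b) : w ∉ T := by
  rcases hw.cases_tail with rfl | ⟨_, -, -, hw⟩
  exacts [hb, hw]

theorem mem_complComponent_of_dist1 {x y : V3} (hy : y ∈ complComponent T b)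
    (hxy : dist1 x y = 1) (hx : x ∉ T) : x ∈ complComponent T b :=
  Relation.ReflTransGen.tail hy ⟨by rw [dist1_comm]; exact hxy, hx⟩

theorem reflTransGen_sameSide_of_mem_complComponent {w : V3} (hw : w ∈ complComponent T b) :
    Relation.ReflTransGen (SameSide (complComponent T b)) b w := by
  induction hw with
  | refl => exact .refl
  | @tail x y hbx hxy ih => exact ih.tail ⟨hxy.1, iff_of_true hbx (hbx.tail hxy)⟩

variable {ζ : Config} (hT : ∀ x y, x ∈ T → (cfgGraph ζ).Adj x y → y ∈ T) (hb : b ∉ T)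
include hT hb

theorem eq_false_of_isCrossing_complComponent {e : EdgeP}
    (he : IsCrossing (complComponent T b) e) : ζ e = false := by
  obtain ⟨x, y, rfl, hxy, hx, hy⟩ := he
  have hxT : x ∈ T := by
    by_contra hxT
    exact hx (mem_complComponent_of_dist1 hy hxy hxT)
  by_contra hζ
  exact not_mem_of_mem_complComponent hb hy (hT x y hxT ⟨hxy, by simpa using hζ⟩)

theorem sameSide_of_cfgGraph_adj {x y : V3} (hxy : (cfgGraph ζ).Adj x y) :
    SameSide (complComponent T b) x y := by
  have hcross : ∀ {x y}, (cfgGraph ζ).Adj x y → x ∉ complComponent T b →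
      y ∉ complComponent T b := fun h hx hy => by
    have := eq_false_of_isCrossing_complComponent hT hb ⟨_, _, rfl, h.1, hx, hy⟩
    simp [h.2] at this
  exact ⟨hxy.1, not_iff_not.1 ⟨hcross hxy, hcross hxy.symm⟩⟩

end ComplComponent

section Routing

def AdjIn (S : Set V3) (x y : V3) : Prop := dist1 x y = 1 ∧ x ∈ S ∧ y ∈ S

theorem AdjIn.symm {S : Set V3} {x y : V3} (h : AdjIn S x y) : AdjIn S y x :=
  ⟨by rw [dist1_comm]; exact h.1, h.2.2, h.2.1⟩

theorem reflTransGen_adjIn_update_of_le {S : Set V3} {x : V3} {i : Fin 3} {t : ℤ}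
    (hle : x i ≤ t) (h : ∀ s, x i ≤ s → s ≤ t → Function.update x i s ∈ S) :
    Relation.ReflTransGen (AdjIn S) x (Function.update x i t) := by
  induction t, hle using Int.leInduction with
  | base => rw [Function.update_eq_self]
  | succ n hn ih =>
    exact (ih fun s h1 h2 => h s h1 (by omega)).tail
      ⟨dist1_update_update_add_one x i n, h n hn (by omega), h (n + 1) (by omega) le_rfl⟩

theorem reflTransGen_adjIn_update {S : Set V3} {x : V3} {i : Fin 3} {t : ℤ}
    (h : ∀ s, min (x i) t ≤ s → s ≤ max (x i) t → Function.update x i s ∈ S) :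
    Relation.ReflTransGen (AdjIn S) x (Function.update x i t) := by
  rcases le_total (x i) t with hle | hle
  · exact reflTransGen_adjIn_update_of_le hle fun s h1 h2 => h s (by omega) (by omega)
  · have h' := reflTransGen_adjIn_update_of_le (S := S) (x := Function.update x i t) (i := i)
      (t := x i) (by simpa using hle) fun s h1 h2 => by
        rw [Function.update_idem]
        exact h s (by simp at h1; omega) (by omega)
    rw [Function.update_idem, Function.update_eq_self] at h'
    exact h'.symm_of_symmetric fun _ _ => AdjIn.symm

def sideOutside (L M : ℕ) (H : ℤ) : Set V3 := {u | u ∉ vbox L M ∧ (0 < u 2 ↔ 0 < H)}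

variable {L M : ℕ} {H : ℤ}

theorem reflTransGen_adjIn_sideOutside_single (hH : H = M + 1 ∨ H = -(M + 1)) {u : V3}
    (hu : u ∈ sideOutside L M H) :
    Relation.ReflTransGen (AdjIn (sideOutside L M H)) u (Pi.single 2 H) := by
  simp only [sideOutside, vbox, Set.mem_ofPred_eq, abs_le] at hu
  have leg₁ := reflTransGen_adjIn_update (S := sideOutside L M H) (x := u) (i := 2) (t := H)
    fun s h1 h2 => by simp [sideOutside, vbox, abs_le]; omega
  have leg₂ := reflTransGen_adjIn_update (S := sideOutside L M H)
    (x := Function.update u 2 H) (i := 0) (t := 0)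
    fun s h1 h2 => by simp [sideOutside, vbox, abs_le]; omega
  have leg₃ := reflTransGen_adjIn_update (S := sideOutside L M H)
    (x := Function.update (Function.update u 2 H) 0 0) (i := 1) (t := 0)
    fun s h1 h2 => by simp [sideOutside, vbox, abs_le]; omega
  have hend : Function.update (Function.update (Function.update u 2 H) 0 0) 1 0 =
      Pi.single 2 H := by
    ext k; fin_cases k <;> simp
  rw [hend] at leg₃
  exact leg₁.trans (leg₂.trans leg₃)

theorem reflTransGen_adjIn_sideOutside (hH : H = M + 1 ∨ H = -(M + 1)) {u w : V3}
    (hu : u ∈ sideOutside L M H) (hw : w ∈ sideOutside L M H) :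
    Relation.ReflTransGen (AdjIn (sideOutside L M H)) u w :=
  (reflTransGen_adjIn_sideOutside_single hH hu).trans
    ((reflTransGen_adjIn_sideOutside_single hH hw).symm_of_symmetric fun _ _ => AdjIn.symm)

theorem cfgGraph_adj_of_adjIn_sideOutside {ζ : Config} (hζ : ζ ∈ OmegaMu L M) {x y : V3}
    (h : AdjIn (sideOutside L M H) x y) : (cfgGraph ζ).Adj x y := by
  obtain ⟨hxy, ⟨hx, hxH⟩, hy, hyH⟩ := h
  refine ⟨hxy, ?_⟩
  have hbox : s(x, y) ∉ edgeBox L M := by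
    rintro ⟨-, z, hz, hzΛ⟩
    rcases Sym2.mem_iff.mp hz with rfl | rfl <;> contradiction
  rw [hζ _ hbox, dobMu, if_neg]
  rintro ⟨x', y', hxy', hx', hy', -, -⟩
  rcases Sym2.eq_iff.mp hxy' with ⟨rfl, rfl⟩ | ⟨rfl, rfl⟩ <;> omega

theorem reachable_of_mem_sideOutside {ζ : Config} (hζ : ζ ∈ OmegaMu L M)
    (hH : H = M + 1 ∨ H = -(M + 1)) {u w : V3} (hu : u ∈ sideOutside L M H)
    (hw : w ∈ sideOutside L M H) : (cfgGraph ζ).Reachable u w :=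
  (SimpleGraph.reachable_iff_reflTransGen u w).2 <|
    Relation.ReflTransGen.mono (fun _ _ => cfgGraph_adj_of_adjIn_sideOutside hζ) _ _
      (reflTransGen_adjIn_sideOutside hH hu hw)

end Routing

section Interface

variable {EE : Set EdgeP} {ζ : Config}

theorem dualPlq_mem_openPlqs {e : EdgeP} (he : IsLatticeEdge e) (hζ : ζ e = false) :
    dualPlq e ∈ openPlqs ζ :=
  ⟨e, he, hζ, rfl⟩

theorem dualPlq_mem_interfaceOf_of_mem_unitSquare {x : V3} {i j : Fin 3} (hij : i ≠ j)
    {e f : EdgeP} (he : e ∈ unitSquare x i j) (hf : f ∈ unitSquare x i j) (hfζ : ζ f = false)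
    (heδ : dualPlq e ∈ interfaceOf EE ζ) : dualPlq f ∈ interfaceOf EE ζ := by
  rcases eq_or_ne e f with rfl | hef
  · exact heδ
  obtain ⟨-, P₀, hP₀, hchain⟩ := heδ
  have hfopen := dualPlq_mem_openPlqs (isLatticeEdge_of_mem_unitSquare hf) hfζ
  exact ⟨hfopen, P₀, hP₀, hchain.tail ⟨hfopen, oneConn_dualPlq_of_mem_unitSquare hij he hf hef⟩⟩

theorem dualPlq_mem_interfaceOf_of_reachable {T : Set V3} {b p q u v : V3}
    (hT : ∀ x y, x ∈ T → (cfgGraph ζ).Adj x y → y ∈ T) (hb : b ∉ T) (hpT : p ∈ T)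
    (hqO : q ∈ complComponent T b) (hpq : dist1 p q = 1)
    (hpqδ : dualPlq s(p, q) ∈ interfaceOf EE ζ) (huv : dist1 u v = 1)
    (hup : (cfgGraph ζ).Reachable u p) (hvO : v ∈ complComponent T b) :
    dualPlq s(u, v) ∈ interfaceOf EE ζ := by
  have hsame_up : Relation.ReflTransGen (SameSide (complComponent T b)) u p :=
    Relation.ReflTransGen.mono (fun _ _ => sameSide_of_cfgGraph_adj hT hb) _ _
      ((SimpleGraph.reachable_iff_reflTransGen _ _).1 hup)
  have hsame_vq : Relation.ReflTransGen (SameSide (complComponent T b)) v q :=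
    ((reflTransGen_sameSide_of_mem_complComponent hvO).symm_of_symmetric
      fun _ _ => SameSide.symm).trans (reflTransGen_sameSide_of_mem_complComponent hqO)
  exact (mem_iff_mem_of_sameSide (K := dualPlq ⁻¹' interfaceOf EE ζ)
    (fun _ _ _ hij _ he _ hf hfO heδ => dualPlq_mem_interfaceOf_of_mem_unitSquare hij he hf
      (eq_false_of_isCrossing_complComponent hT hb hfO) heδ)
    (fun h => not_mem_of_mem_complComponent hb h hpT) hqO hpq huv hsame_up hsame_vq).2 hpqδ

theorem dualPlq_mem_interfaceOf_edgeBox {L M : ℕ} {x : V3} (hx₂ : x 2 = 0)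
    (hx : x ∉ vbox L M) (hx' : x + Pi.single 2 1 ∉ vbox L M)
    (hζ : ζ s(x, x + Pi.single 2 1) = false) :
    dualPlq s(x, x + Pi.single 2 1) ∈ interfaceOf (edgeBox L M) ζ := by
  refine ⟨dualPlq_mem_openPlqs (isLatticeEdge_add_single x 2) hζ, _,
    ⟨⟨x, hx₂, by rw [ez_eq_single]⟩, ?_⟩, .refl⟩
  rintro ⟨e, ⟨he, z, hz, hzΛ⟩, heq⟩
  rw [← dualPlq_injOn (isLatticeEdge_add_single x 2) he heq] at hz
  rcases Sym2.mem_iff.mp hz with rfl | rfl <;> contradiction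

end Interface

theorem mem_eventI_of_closed_on_interface {L M : ℕ} {ζ ω : Config} (hζI : ζ ∈ eventI L M)
    (hζ : ζ ∈ OmegaMu L M)
    (hcl : ∀ e, IsLatticeEdge e → dualPlq e ∈ interfaceOf (edgeBox L M) ζ → ω e = false) :
    ω ∈ eventI L M := by
  rintro ⟨a, ha, b, hb, hab⟩
  set T := {w | (cfgGraph ζ).Reachable a w}
  have hT : ∀ x y, x ∈ T → (cfgGraph ζ).Adj x y → y ∈ T :=
    fun _ _ hx hxy => hx.trans hxy.reachable
  have hbT : b ∉ T := fun h => hζI ⟨a, ha, b, hb, h⟩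
  have hup : (M + 1 : ℤ) = M + 1 ∨ (M + 1 : ℤ) = -(M + 1) := Or.inl rfl
  have hdown : (-(M + 1) : ℤ) = M + 1 ∨ (-(M + 1) : ℤ) = -(M + 1) := Or.inr rfl
  have ha' : a ∈ sideOutside L M (M + 1) := ⟨ha.1, iff_of_true ha.2.1 (by positivity)⟩
  have hb' : b ∈ sideOutside L M (-(M + 1)) :=
    ⟨hb.1, iff_of_false (by have := hb.2.1; omega) (by omega)⟩
  -- `s(q, p)` is an edge of `δ₀` outside `Λ_{L,M}`, crossing from `T` to `O`
  set q : V3 := Pi.single 0 ((L : ℤ) + 1)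
  set p : V3 := q + Pi.single 2 1
  have hq : q ∈ sideOutside L M (-(M + 1)) := by simp [q, sideOutside, vbox, abs_le]
  have hp : p ∈ sideOutside L M (M + 1) := by simp [p, q, sideOutside, vbox, abs_le]
  have hpT : p ∈ T := reachable_of_mem_sideOutside hζ hup ha' hp
  have hqO : q ∈ complComponent T b := by
    refine Relation.ReflTransGen.mono
      (fun x y hxy => ⟨hxy.1, fun hyT => hζI ⟨a, ha, b, hb, ?_⟩⟩) _ _
      (reflTransGen_adjIn_sideOutside hdown hb' hq)
    exact hyT.trans (reachable_of_mem_sideOutside hζ hdown hxy.2.2 hb')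
  have hpq : dist1 p q = 1 := by rw [dist1_comm]; exact dist1_add_single q 2
  have hpqδ : dualPlq s(p, q) ∈ interfaceOf (edgeBox L M) ζ := by
    have hζpq := eq_false_of_isCrossing_complComponent hT hbT
      ⟨p, q, rfl, hpq, fun h => not_mem_of_mem_complComponent hbT h hpT, hqO⟩
    rw [Sym2.eq_swap] at hζpq ⊢
    exact dualPlq_mem_interfaceOf_edgeBox (by simp [q]) hq.1 hp.1 hζpq
  obtain ⟨W⟩ := hab
  obtain ⟨d, -, hu, hv⟩ := W.exists_boundary_dart (complComponent T b)ᶜ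
    (not_mem_of_mem_complComponent hbT · (SimpleGraph.Reachable.refl a)) (by simpa using .refl)
  simp only [Set.mem_compl_iff, not_not] at hu hv
  have huT : d.fst ∈ T := by
    by_contra huT
    exact hu (mem_complComponent_of_dist1 hv d.adj.1 huT)
  have huvδ := dualPlq_mem_interfaceOf_of_reachable hT hbT hpT hqO hpq hpqδ d.adj.1
    (huT.symm.trans hpT) hv
  exact absurd (hcl _ ⟨_, _, rfl, d.adj.1⟩ huvδ) (by rw [d.adj.2]; decide)

theorem statement4_general (L M : ℕ) :
    eventI L M ∩ OmegaMu L M =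
      {ω | ω ∈ OmegaMu L M ∧ ∃ δ ∈ Dlm L M,
        ∀ e : EdgeP, IsLatticeEdge e → dualPlq e ∈ δ → ω e = false} := by
  ext ω
  constructor
  · rintro ⟨hI, hμ⟩
    refine ⟨hμ, interfaceOf (edgeBox L M) ω, ⟨ω, hI, hμ, rfl⟩, fun e he hδ => ?_⟩
    obtain ⟨⟨e', he', hωe', heq⟩, -⟩ := hδ
    rwa [dualPlq_injOn he he' heq]
  · rintro ⟨hμ, δ, ⟨ζ, hζI, hζ, rfl⟩, hcl⟩
    exact ⟨mem_eventI_of_closed_on_interface hζI hζ hcl, hμ⟩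

/-- `I_{L,M} ∩ Ω^μ_{L,M}` consists exactly of the configurations all of
whose edges dual to the plaquettes of some interface `δ ∈ D_{L,M}` are closed. -/
theorem statement4 (L M : ℕ) (hL : 1 ≤ L) (hM : 1 ≤ M) :
    eventI L M ∩ OmegaMu L M =
      {ω | ω ∈ OmegaMu L M ∧ ∃ δ ∈ Dlm L M,
        ∀ e : EdgeP, IsLatticeEdge e → dualPlq e ∈ δ → ω e = false} :=
  statement4_general L M

end
end

section
/- Let G=(V,E) be a finite connected subgraph of 𝕃. There exists a splitting set Q of plaquettes such that: (i) V ⊆ ins([Q]); (ii) every plaquette in Q is dual to some edge of 𝔼 having exactly one endvertex in V; (iii) if W is a connected set of vertices of ℤ³ with V∩W=∅ such that there exists an infinite path of 𝕃 starting in W which uses no vertex of V, then W ⊆ out([Q]). -/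
open MeasureTheory Filter Topology ProbabilityTheory

noncomputable section

attribute [local instance] Classical.propDecidable

/-!
Let `U = fill V` be `V` together with the finite components of its complement in the lattice,
and let `Q` consist of the plaquettes dual to the edges leaving `U`; the inner end of such an
edge lies in `V`. Each plaquette is the common face `cube x ∩ cube y` of the unit cubes around
the ends of its edge.

Every point of `ℝ³` lies in such a cube, and a point lying both in a cube centred in `U` and in
one centred outside `U` lies on `[Q]`. So the bounded union of the cubes around `U` and the
closed (locally finite) union of the other cubes split `ℝ³ ∖ [Q]`, giving `V ⊆ ins [Q]`. A
segment between adjacent lattice points outside `V` meets no plaquette of `Q`, whence (iii).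

`Q` is `1`-connected by a parity argument. Let `S` be a `1`-connected component of `Q`. Two
distinct plaquettes dual to edges of one lattice square meet along a segment, so `S` contains
either all or none of the (evenly many) plaquettes of `Q` dual to edges of the square. Hence the
parity of the number of plaquettes of `S` met by the vertical ray above a lattice point changes
exactly across the edges dual to `S`. It is constant on `V` and on the connected set `ℤ³ ∖ U`,
so all edges from `V` to `ℤ³ ∖ U` are dual to `S`, that is, `S = Q`.
-/

namespace SplittingSet

open Function Set

section LatticeMoves

def shift (p : V3) (j : Fin 3) (d : ℤ) : V3 := update p j (p j + d)

@[simp] lemma shift_apply_self (p : V3) (j : Fin 3) (d : ℤ) : shift p j d j = p j + d :=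
  update_self ..

@[simp] lemma shift_apply_of_ne (p : V3) {i j : Fin 3} (d : ℤ) (h : i ≠ j) :
    shift p j d i = p i :=
  update_of_ne h ..

@[simp] lemma shift_zero (p : V3) (j : Fin 3) : shift p j 0 = p := by
  simp [shift]

lemma shift_shift (p : V3) (j : Fin 3) (d e : ℤ) :
    shift (shift p j d) j e = shift p j (d + e) := by
  simp [shift, add_assoc]

lemma shift_comm (u : V3) {a b : Fin 3} (hab : a ≠ b) (d e : ℤ) :
    shift (shift u a d) b e = shift (shift u b e) a d := by
  simp only [shift, update_of_ne hab, update_of_ne hab.symm]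
  exact update_comm hab _ _ _

lemma dist1_self (p : V3) : dist1 p p = 0 := by
  simp [dist1]

lemma dist1_update_update (p : V3) (j : Fin 3) (s t : ℤ) :
    dist1 (update p j s) (update p j t) = |s - t| := by
  rw [dist1, Finset.sum_eq_single j (fun i _ hi => by simp [update_of_ne hi]) (by simp)]
  simp

lemma dist1_shift_shift (p : V3) (j : Fin 3) (d e : ℤ) :
    dist1 (shift p j d) (shift p j e) = |d - e| := by
  rw [shift, shift, dist1_update_update]
  ring_nf

lemma dist1_shift_one (p : V3) (j : Fin 3) : dist1 p (shift p j 1) = 1 := by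
  simpa using dist1_shift_shift p j 0 1

lemma dist1_update_add_abs (u v : V3) (i : Fin 3) :
    dist1 (update u i (v i)) v + |u i - v i| = dist1 u v := by
  simp only [dist1]
  rw [← Finset.add_sum_erase _ _ (Finset.mem_univ i),
    ← Finset.add_sum_erase Finset.univ (fun l => |u l - v l|) (Finset.mem_univ i),
    Finset.sum_congr rfl fun l hl => by rw [update_of_ne (Finset.ne_of_mem_erase hl)]]
  simp only [update_self, sub_self, abs_zero, zero_add]
  ring

lemma dist1_nonneg (u v : V3) : 0 ≤ dist1 u v :=
  Finset.sum_nonneg fun _ _ => abs_nonneg _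

lemma eq_of_dist1_eq_zero {u v : V3} (h : dist1 u v = 0) : u = v := funext fun i => by
  have hi : |u i - v i| ≤ dist1 u v :=
    Finset.single_le_sum (f := fun l => |u l - v l|) (fun _ _ => abs_nonneg _) (Finset.mem_univ i)
  rwa [h, abs_nonpos_iff, sub_eq_zero] at hi

lemma dist1_of_isLatticeEdge {a b : V3} (h : IsLatticeEdge s(a, b)) : dist1 a b = 1 := by
  obtain ⟨x, y, hxy, hd⟩ := h
  rcases Sym2.eq_iff.mp hxy with ⟨rfl, rfl⟩ | ⟨rfl, rfl⟩
  · exact hd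
  · rwa [dist1_comm]

lemma abs_sub_eq_one_of_ne {x y : V3} (h : dist1 x y = 1) {i : Fin 3} (hi : x i ≠ y i) :
    |x i - y i| = 1 :=
  le_antisymm (abs_coord_le_of_dist1 x y h i) (Int.one_le_abs (sub_ne_zero.mpr hi))

lemma eq_of_dist1_eq_one_of_ne {x y : V3} (h : dist1 x y = 1) {i j : Fin 3} (hj : x j ≠ y j)
    (hij : i ≠ j) : x i = y i := by
  have hsum : |x i - y i| + |x j - y j| ≤ dist1 x y := by
    calc |x i - y i| + |x j - y j| = ∑ l ∈ {i, j}, |x l - y l| :=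
          (Finset.sum_pair (f := fun l => |x l - y l|) hij).symm
      _ ≤ dist1 x y := Finset.sum_le_sum_of_subset_of_nonneg (Finset.subset_univ _)
          fun _ _ _ => abs_nonneg _
  rwa [h, abs_sub_eq_one_of_ne h hj, add_le_iff_nonpos_left, abs_nonpos_iff, sub_eq_zero] at hsum

lemma eq_shift_of_dist1_eq_one {x y : V3} (h : dist1 x y = 1) {j : Fin 3}
    (hj : y j = x j + 1) : y = shift x j 1 := funext fun i => by
  by_cases hi : i = j
  · subst hi; rw [shift_apply_self, hj]
  · rw [shift_apply_of_ne _ _ hi, eq_of_dist1_eq_one_of_ne h (by omega) hi]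

lemma exists_eq_shift_of_dist1_eq_one {x y : V3} (h : dist1 x y = 1) :
    ∃ j, y = shift x j 1 ∨ x = shift y j 1 := by
  obtain ⟨j, hj⟩ : ∃ j, x j ≠ y j := by
    by_contra! hxy
    rw [funext hxy, dist1_self] at h
    exact zero_ne_one h
  rcases (abs_eq zero_le_one).mp (abs_sub_eq_one_of_ne h hj) with hxy | hxy
  · exact ⟨j, Or.inr (eq_shift_of_dist1_eq_one (by rwa [dist1_comm]) (by omega))⟩
  · exact ⟨j, Or.inl (eq_shift_of_dist1_eq_one h (by omega))⟩

lemma eq_or_eq_of_forall_eq_or_eq {x y a : V3} (h : dist1 x y = 1)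
    (ha : ∀ i, a i = x i ∨ a i = y i) : a = x ∨ a = y := by
  by_contra! hne
  obtain ⟨i, hi⟩ := ne_iff.mp hne.1
  obtain ⟨j, hj⟩ := ne_iff.mp hne.2
  have hai : a i = y i := (ha i).resolve_left hi
  have haj : a j = x j := (ha j).resolve_right hj
  have hij : j ≠ i := fun hji => hj (hji ▸ hai)
  exact hj (haj ▸ eq_of_dist1_eq_one_of_ne h (fun hxy => hi (hai.trans hxy.symm)) hij)

end LatticeMoves

section Cubes

/-- A ball of the sup metric: the closed unit cube centred at `v`. -/
def cube (v : V3) : Set R3 := Metric.closedBall (toR v) (1 / 2)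

lemma mem_cube {z : R3} {v : V3} : z ∈ cube v ↔ ∀ i, |z i - v i| ≤ 1 / 2 := by
  simp only [cube, Metric.mem_closedBall, dist_pi_le_iff (by norm_num : (0 : ℝ) ≤ 1 / 2),
    Real.dist_eq, toR]

lemma int_eq_of_abs_sub_lt_one {a b : ℤ} (h : |(a : ℝ) - b| < 1) : a = b := by
  have h' : |a - b| < 1 := by exact_mod_cast h
  rw [abs_lt] at h'
  omega

lemma toR_mem_cube {v w : V3} : toR w ∈ cube v ↔ v = w := by
  refine ⟨fun h => funext fun i => ?_, fun h => h ▸ Metric.mem_closedBall_self (by norm_num)⟩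
  have hi : |(w i : ℝ) - v i| ≤ 1 / 2 := mem_cube.mp h i
  exact int_eq_of_abs_sub_lt_one (by rw [abs_sub_comm]; linarith)

lemma abs_sub_le_half_and_abs_sub_le_half_iff {x y z : ℝ} (h : |x - y| = 1) :
    |z - x| ≤ 1 / 2 ∧ |z - y| ≤ 1 / 2 ↔ z = (x + y) / 2 := by
  constructor
  · rintro ⟨hx, hy⟩
    rw [abs_le] at hx hy
    rcases (abs_eq zero_le_one).mp h with h | h <;> linarith [hx.1, hx.2, hy.1, hy.2]
  · rintro rfl
    rw [show (x + y) / 2 - x = -((x - y) / 2) by ring, show (x + y) / 2 - y = (x - y) / 2 by ring,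
      abs_neg, abs_div, h]
    norm_num

lemma plqOf_eq_cube_inter {x y : V3} (h : dist1 x y = 1) : plqOf x y = cube x ∩ cube y := by
  ext z
  simp only [plqOf, mem_ofPred_eq, mem_inter_iff, mem_cube, ← forall_and]
  refine forall_congr' fun i => ?_
  by_cases hxy : x i = y i
  · simp [hxy]
  · have h1 : |(x i : ℝ) - y i| = 1 := by exact_mod_cast abs_sub_eq_one_of_ne h hxy
    rw [imp_iff_right hxy]
    simp only [hxy, false_imp_iff, true_and]
    exact (abs_sub_le_half_and_abs_sub_le_half_iff h1).symm

lemma dualPlq_eq_cube_inter {x y : V3} (h : dist1 x y = 1) :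
    dualPlq s(x, y) = cube x ∩ cube y := by
  ext z
  refine ⟨?_, fun hz => ⟨x, y, rfl, (plqOf_eq_cube_inter h).symm ▸ hz⟩⟩
  rintro ⟨a, b, hab, hz⟩
  rcases Sym2.eq_iff.mp hab with ⟨rfl, rfl⟩ | ⟨rfl, rfl⟩
  · rwa [plqOf_eq_cube_inter h] at hz
  · rw [plqOf_eq_cube_inter (by rwa [dist1_comm])] at hz
    exact hz.symm

lemma dualPlq_shift (p : V3) (j : Fin 3) :
    dualPlq s(p, shift p j 1) = cube p ∩ cube (shift p j 1) :=
  dualPlq_eq_cube_inter (dist1_shift_one p j)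

lemma toR_notMem_dualPlq {x y : V3} (h : dist1 x y = 1) (w : V3) : toR w ∉ dualPlq s(x, y) := by
  rw [dualPlq_eq_cube_inter h]
  rintro ⟨hx, hy⟩
  rw [toR_mem_cube.mp hx, toR_mem_cube.mp hy, dist1_self] at h
  exact zero_ne_one h

lemma eq_or_eq_of_mem_uIcc {p q a : ℤ} (hpq : |p - q| ≤ 1) {r : ℝ}
    (hr : r ∈ uIcc (p : ℝ) q) (ha : |r - a| ≤ 1 / 2) : a = p ∨ a = q := by
  rw [mem_uIcc] at hr
  rw [abs_le] at ha hpq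
  have hlo : ((min p q - 1 : ℤ) : ℝ) < a := by
    push_cast
    rcases hr with ⟨h1, -⟩ | ⟨h1, -⟩
    · linarith [min_le_left (p : ℝ) q]
    · linarith [min_le_right (p : ℝ) q]
  have hhi : (a : ℝ) < ((max p q + 1 : ℤ) : ℝ) := by
    push_cast
    rcases hr with ⟨-, h2⟩ | ⟨-, h2⟩
    · linarith [le_max_right (p : ℝ) q]
    · linarith [le_max_left (p : ℝ) q]
  have := Int.cast_lt.mp hlo
  have := Int.cast_lt.mp hhi
  omega

lemma eq_or_eq_of_mem_segment_of_mem_cube {x y a : V3} (hxy : dist1 x y = 1) {z : R3}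
    (hz : z ∈ segment ℝ (toR x) (toR y)) (ha : z ∈ cube a) : a = x ∨ a = y := by
  refine eq_or_eq_of_forall_eq_or_eq hxy fun i => ?_
  have hzi : z i ∈ segment ℝ (x i : ℝ) (y i) := by
    obtain ⟨s, t, hs, ht, hst, rfl⟩ := hz
    exact ⟨s, t, hs, ht, hst, by simp [toR]⟩
  rw [segment_eq_uIcc] at hzi
  exact eq_or_eq_of_mem_uIcc (abs_coord_le_of_dist1 x y hxy i) hzi (mem_cube.mp ha i)

lemma midpoint_mem_dualPlq {x y : V3} (h : dist1 x y = 1) :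
    midpoint ℝ (toR x) (toR y) ∈ dualPlq s(x, y) := by
  have hd : dist (toR x) (toR y) ≤ 1 := by
    refine (dist_pi_le_iff zero_le_one).mpr fun i => ?_
    simp only [toR, Int.dist_cast_real, Int.dist_eq]
    exact_mod_cast abs_coord_le_of_dist1 x y h i
  have hhalf : ‖(2 : ℝ)‖⁻¹ * dist (toR x) (toR y) ≤ 1 / 2 := by
    rw [Real.norm_two]
    linarith
  rw [dualPlq_eq_cube_inter h]
  exact ⟨(dist_midpoint_left _ _).trans_le hhalf, (dist_midpoint_right _ _).trans_le hhalf⟩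

lemma dualPlq_inj {x y a b : V3} (hxy : dist1 x y = 1) (hab : dist1 a b = 1)
    (h : dualPlq s(x, y) = dualPlq s(a, b)) : s(x, y) = s(a, b) := by
  have hm := midpoint_mem_dualPlq hxy
  rw [h, dualPlq_eq_cube_inter hab] at hm
  have hseg := midpoint_mem_segment (𝕜 := ℝ) (toR x) (toR y)
  have ha := eq_or_eq_of_mem_segment_of_mem_cube hxy hseg hm.1
  have hb := eq_or_eq_of_mem_segment_of_mem_cube hxy hseg hm.2
  have hne : a ≠ b := by
    rintro rfl
    rw [dist1_self] at hab
    exact zero_ne_one hab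
  rcases ha with rfl | rfl <;> rcases hb with rfl | rfl
  · exact absurd rfl hne
  · rfl
  · exact Sym2.eq_swap
  · exact absurd rfl hne

lemma abs_sub_le_one_of_mem_cube {z : R3} {u v : V3} (hu : z ∈ cube u) (hv : z ∈ cube v)
    (i : Fin 3) : |u i - v i| ≤ 1 := by
  have h : |((u i - v i : ℤ) : ℝ)| ≤ 1 := by
    push_cast
    calc |(u i : ℝ) - v i| = |(z i - v i) - (z i - u i)| := by ring_nf
      _ ≤ |z i - v i| + |z i - u i| := abs_sub _ _
      _ ≤ 1 := by linarith [mem_cube.mp hu i, mem_cube.mp hv i]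
  exact_mod_cast h

lemma exists_step_of_mem_cube {z : R3} {u v : V3} (hu : z ∈ cube u) (hv : z ∈ cube v)
    (huv : u ≠ v) : ∃ u', dist1 u u' = 1 ∧ z ∈ cube u' ∧ dist1 u' v + 1 = dist1 u v := by
  obtain ⟨i, hi⟩ := ne_iff.mp huv
  have hone : |u i - v i| = 1 :=
    le_antisymm (abs_sub_le_one_of_mem_cube hu hv i) (Int.one_le_abs (sub_ne_zero.mpr hi))
  refine ⟨update u i (v i), ?_, mem_cube.mpr fun l => ?_, ?_⟩
  · rw [← hone, ← dist1_update_update u i (u i) (v i), update_eq_self]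
  · by_cases hl : l = i
    · subst hl; simpa using mem_cube.mp hv l
    · simpa [hl] using mem_cube.mp hu l
  · rw [← dist1_update_add_abs u v i, hone]

end Cubes

section SquarePlaquettes

lemma nonempty_range_homeomorph_Icc {X : Type*} [TopologicalSpace X] [T2Space X]
    {f : Icc (0 : ℝ) 1 → X} (hf : Continuous f) (hinj : Injective f) :
    Nonempty (range f ≃ₜ Icc (0 : ℝ) 1) :=
  ⟨(hf.isClosedEmbedding hinj).isEmbedding.toHomeomorph.symm⟩

lemma cube_inter_cube_subset {x y w : V3} (h : ∀ i, w i = x i ∨ w i = y i) :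
    cube x ∩ cube y ⊆ cube w := by
  rintro z ⟨hx, hy⟩
  refine mem_cube.mpr fun i => ?_
  rcases h i with hi | hi <;> rw [hi]
  exacts [mem_cube.mp hx i, mem_cube.mp hy i]

variable {u : V3} {a b : Fin 3}

lemma cube_inter_cube_shift_shift_subset (hab : a ≠ b) :
    cube u ∩ cube (shift (shift u a 1) b 1) ⊆ cube (shift u a 1) :=
  cube_inter_cube_subset fun i => by
    by_cases hi : i = b
    · subst hi; simp [hab.symm]
    · simp [hi]

lemma cube_shift_inter_cube_shift_subset (hab : a ≠ b) :
    cube (shift u a 1) ∩ cube (shift u b 1) ⊆ cube u ∩ cube (shift (shift u a 1) b 1) :=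
  subset_inter
    (cube_inter_cube_subset fun i => by
      by_cases hi : i = a
      · subst hi; simp [hab]
      · simp [hi])
    (cube_inter_cube_subset fun i => by
      by_cases hi : i = b
      · subst hi; simp [hab.symm]
      · simp [hi])

/-- Diagonally opposite cubes of a lattice square meet in the unit segment through the centre
of the square orthogonal to it. -/
lemma cube_inter_cube_shift_shift_eq_range (hab : a ≠ b) {c : Fin 3} (hca : c ≠ a)
    (hcb : c ≠ b) :
    cube u ∩ cube (shift (shift u a 1) b 1) =
      range fun t : Icc (0 : ℝ) 1 =>
        update (fun i => (u i : ℝ) + 1 / 2) c (u c - 1 / 2 + t) := by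
  have hcover : ∀ i, i ≠ c → i = a ∨ i = b := by
    revert a b c; decide
  have hfar : ∀ i, i ≠ c → ((shift (shift u a 1) b 1 i : ℤ) : ℝ) = u i + 1 := by
    intro i hi
    rcases hcover i hi with rfl | rfl
    · simp [hab]
    · simp [hab.symm]
  ext z
  simp only [mem_inter_iff, mem_cube, mem_range, Subtype.exists, mem_Icc]
  constructor
  · rintro ⟨h1, h2⟩
    have hc := abs_le.mp (h1 c)
    refine ⟨z c - u c + 1 / 2, ⟨by linarith, by linarith⟩, funext fun i => ?_⟩
    by_cases hi : i = c
    · subst hi; simp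
    · have hunit : |(u i : ℝ) - (u i + 1)| = 1 := by simp
      have hz := (abs_sub_le_half_and_abs_sub_le_half_iff hunit).mp ⟨h1 i, hfar i hi ▸ h2 i⟩
      rw [update_of_ne hi, hz]
      ring
  · rintro ⟨t, ⟨ht0, ht1⟩, rfl⟩
    have hmid : |(u c : ℝ) - 1 / 2 + t - u c| ≤ 1 / 2 := by
      rw [abs_le]; constructor <;> linarith
    refine ⟨fun i => ?_, fun i => ?_⟩ <;> by_cases hi : i = c
    · subst hi; simpa using hmid
    · rw [update_of_ne hi]; norm_num [abs_of_pos]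
    · subst hi; simpa [hca, hcb] using hmid
    · rw [update_of_ne hi, hfar i hi]; norm_num [abs_of_pos]

lemma nonempty_cube_inter_cube_shift_shift_homeomorph (hab : a ≠ b) :
    Nonempty (↥(cube u ∩ cube (shift (shift u a 1) b 1)) ≃ₜ Icc (0 : ℝ) 1) := by
  obtain ⟨c, hca, hcb⟩ : ∃ c, c ≠ a ∧ c ≠ b :=
    (by decide : ∀ a b : Fin 3, ∃ c, c ≠ a ∧ c ≠ b) a b
  have hcont : Continuous fun t : Icc (0 : ℝ) 1 =>
      update (fun i => (u i : ℝ) + 1 / 2) c (u c - 1 / 2 + t) :=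
    continuous_const.update c (continuous_const.add continuous_subtype_val)
  have hinj : Injective fun t : Icc (0 : ℝ) 1 =>
      update (fun i => (u i : ℝ) + 1 / 2) c (u c - 1 / 2 + t) :=
    fun t t' h => Subtype.ext (by simpa using congrFun h c)
  obtain ⟨e⟩ := nonempty_range_homeomorph_Icc hcont hinj
  exact ⟨(Homeomorph.setCongr (cube_inter_cube_shift_shift_eq_range hab hca hcb)).trans e⟩

def squarePlaqs (u : V3) (a b : Fin 3) : Set (Set R3) :=
  {dualPlq s(u, shift u a 1), dualPlq s(shift u b 1, shift (shift u b 1) a 1),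
    dualPlq s(u, shift u b 1), dualPlq s(shift u a 1, shift (shift u a 1) b 1)}

/-- Two distinct plaquettes of a square contain three of its corners' cubes, among them a
diagonal pair, whose intersection lies in all four cubes. -/
lemma inter_eq_of_mem_squarePlaqs (hab : a ≠ b) {P Q : Set R3} (hP : P ∈ squarePlaqs u a b)
    (hQ : Q ∈ squarePlaqs u a b) (hPQ : P ≠ Q) :
    P ∩ Q = cube u ∩ cube (shift (shift u a 1) b 1) := by
  have h1 := cube_inter_cube_shift_shift_subset (u := u) hab
  have h2 := cube_inter_cube_shift_shift_subset (u := u) hab.symm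
  have h3 := cube_shift_inter_cube_shift_subset (u := u) hab
  rw [shift_comm u hab.symm] at h2
  ext z
  have hz1 := @h1 z
  have hz2 := @h2 z
  have hz3 := @h3 z
  simp only [mem_inter_iff] at hz1 hz2 hz3
  simp only [squarePlaqs, mem_insert_iff, mem_singleton_iff] at hP hQ
  rcases hP with rfl | rfl | rfl | rfl <;> rcases hQ with rfl | rfl | rfl | rfl <;>
    first
    | exact absurd rfl hPQ
    | simp only [mem_inter_iff, dualPlq_shift]
      try simp only [shift_comm u hab.symm]
      -- opaque atoms keep `tauto` from unfolding `cube`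
      generalize (z ∈ cube u) = A at *
      generalize (z ∈ cube (shift u a 1)) = B at *
      generalize (z ∈ cube (shift u b 1)) = C at *
      generalize (z ∈ cube (shift (shift u a 1) b 1)) = D at *
      tauto

lemma eq_or_oneConn_of_mem_squarePlaqs (hab : a ≠ b) {P Q : Set R3}
    (hP : P ∈ squarePlaqs u a b) (hQ : Q ∈ squarePlaqs u a b) : P = Q ∨ OneConn P Q := by
  refine or_iff_not_imp_left.mpr fun hPQ => ⟨hPQ, ?_⟩
  obtain ⟨e⟩ := nonempty_cube_inter_cube_shift_shift_homeomorph (u := u) hab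
  exact ⟨(Homeomorph.setCongr (inter_eq_of_mem_squarePlaqs hab hP hQ hPQ)).trans e⟩

end SquarePlaquettes

section Fill

def box (R : ℤ) : Set V3 := {p | ∀ i, |p i| ≤ R}

lemma box_finite (R : ℤ) : (box R).Finite := by
  refine (Set.Finite.pi (t := fun _ : Fin 3 => Icc (-R) R) fun _ => finite_Icc _ _).subset ?_
  exact fun p hp i _ => mem_Icc.mpr (abs_le.mp (hp i))

lemma exists_subset_box {Vs : Set V3} (hfin : Vs.Finite) :
    ∃ R : ℤ, 0 ≤ R ∧ Vs ⊆ box R := by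
  obtain ⟨R, hR⟩ := (hfin.image fun x : V3 => ∑ i, |x i|).bddAbove
  refine ⟨max R 0, le_max_right _ _, fun x hx i => ?_⟩
  calc |x i| ≤ ∑ j, |x j| :=
        Finset.single_le_sum (fun j _ => abs_nonneg (x j)) (Finset.mem_univ i)
    _ ≤ R := hR (mem_image_of_mem _ hx)
    _ ≤ max R 0 := le_max_left _ _

def ReachOutside (B : Set V3) : V3 → V3 → Prop :=
  Relation.ReflTransGen fun a b => a ∉ B ∧ b ∉ B ∧ dist1 a b = 1

variable {B Vs : Set V3} {R : ℤ}

lemma ReachOutside.symm {x y : V3} (h : ReachOutside B x y) : ReachOutside B y x :=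
  Relation.ReflTransGen.mono (fun _ _ h => ⟨h.2.1, h.1, by rw [dist1_comm]; exact h.2.2⟩) _ _
    (Relation.ReflTransGen.swap _ _ h)

lemma ReachOutside.trans {x y z : V3} (hxy : ReachOutside B x y) (hyz : ReachOutside B y z) :
    ReachOutside B x z :=
  Relation.ReflTransGen.trans hxy hyz

lemma reachOutside_update_of_le {p : V3} {j : Fin 3} {t : ℤ} (hle : p j ≤ t)
    (h : ∀ s, p j ≤ s → s ≤ t → update p j s ∉ B) :
    ReachOutside B p (update p j t) := by
  induction t, hle using Int.leInduction with
  | base => rw [update_eq_self]; exact Relation.ReflTransGen.refl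
  | succ t hle ih =>
    refine (ih fun s h1 h2 => h s h1 (by omega)).tail
      ⟨h t hle (by omega), h (t + 1) (by omega) le_rfl, ?_⟩
    rw [dist1_update_update]
    simp

lemma reachOutside_update {p : V3} {j : Fin 3} {t : ℤ}
    (h : ∀ s, min (p j) t ≤ s → s ≤ max (p j) t → update p j s ∉ B) :
    ReachOutside B p (update p j t) := by
  rcases le_total (p j) t with hle | hle
  · exact reachOutside_update_of_le hle fun s h1 h2 => h s (by omega) (by omega)
  · have hback : ReachOutside B (update p j t) (update (update p j t) j (p j)) :=
      reachOutside_update_of_le (by simpa using hle) fun s h1 h2 => by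
        rw [update_idem]
        exact h s (by simp at h1; omega) (by omega)
    rw [update_idem, update_eq_self] at hback
    exact hback.symm

/-- `Vs` together with the finite components of its complement (from a point of `Vs`
no lattice path avoiding `Vs` leaves it). -/
def fill (Vs : Set V3) : Set V3 := {y | {z | ReachOutside Vs y z}.Finite}

lemma subset_fill : Vs ⊆ fill Vs := by
  intro v hv
  refine (finite_singleton v).subset fun z hz => ?_
  rcases Relation.ReflTransGen.cases_head hz with rfl | ⟨c, hc, -⟩
  · rfl
  · exact absurd hv hc.1

lemma mem_fill_iff_of_reachOutside {x y : V3} (h : ReachOutside Vs x y) :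
    x ∈ fill Vs ↔ y ∈ fill Vs := by
  have : {z | ReachOutside Vs x z} = {z | ReachOutside Vs y z} :=
    ext fun z => ⟨fun hz => h.symm.trans hz, fun hz => h.trans hz⟩
  simp only [fill, mem_ofPred_eq, this]

lemma mem_of_mem_fill_of_notMem_fill {x y : V3} (hx : x ∈ fill Vs) (hy : y ∉ fill Vs)
    (hxy : dist1 x y = 1) : x ∈ Vs := by
  by_contra hxV
  have hreach : ReachOutside Vs x y := .single ⟨hxV, fun h => hy (subset_fill h), hxy⟩
  exact hy ((mem_fill_iff_of_reachOutside hreach).mp hx)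

lemma notMem_fill_of_lt_abs (hbox : Vs ⊆ box R) {p : V3} {i : Fin 3} (h : R < |p i|) :
    p ∉ fill Vs := by
  obtain ⟨σ, hσ, hfar⟩ : ∃ σ : ℤ, σ ≠ 0 ∧ ∀ n : ℕ, ∀ s,
      min (p i) (p i + σ * n) ≤ s → s ≤ max (p i) (p i + σ * n) → R < |s| := by
    rcases le_total 0 (p i) with h0 | h0
    · refine ⟨1, one_ne_zero, fun n s h1 h2 => ?_⟩
      rw [abs_of_nonneg h0] at h
      rw [abs_of_nonneg (by omega)]
      omega
    · refine ⟨-1, by norm_num, fun n s h1 h2 => ?_⟩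
      rw [abs_of_nonpos h0] at h
      rw [abs_of_nonpos (by omega)]
      omega
  have hray : ∀ n : ℕ, update p i (p i + σ * n) ∈ {z | ReachOutside Vs p z} := fun n =>
    reachOutside_update fun s h1 h2 hs => by
      have := hbox hs i
      simp only [update_self] at this
      exact absurd this (not_le.mpr (hfar n s h1 h2))
  have hinj : Injective fun n : ℕ => update p i (p i + σ * n) := by
    intro m n hmn
    have := congrFun hmn i
    simp only [update_self, add_right_inj, mul_eq_mul_left_iff, hσ, or_false] at this
    exact_mod_cast this
  exact infinite_of_injective_forall_mem hinj hray

lemma fill_subset_box (hbox : Vs ⊆ box R) : fill Vs ⊆ box R :=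
  fun _ hp _ => not_lt.mp fun h => notMem_fill_of_lt_abs hbox h hp

lemma reachOutside_fill_corner (hbox : Vs ⊆ box R) (hR : 0 ≤ R) {p : V3} {i : Fin 3}
    (h : R < |p i|) : ReachOutside (fill Vs) p (fun _ => R + 1) := by
  have hthird : ∀ i : Fin 3, ∃ j k, j ≠ i ∧ k ≠ i ∧ j ≠ k ∧ ∀ l, l = i ∨ l = j ∨ l = k := by
    decide
  obtain ⟨j, k, hji, hki, hjk, hcover⟩ := hthird i
  set p₁ := update p j (R + 1)
  set p₂ := update p₁ k (R + 1)
  have leg₁ : ReachOutside (fill Vs) p p₁ := reachOutside_update fun s _ _ =>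
    notMem_fill_of_lt_abs hbox (i := i) (by rwa [update_of_ne hji.symm])
  have hp₁i : p₁ i = p i := update_of_ne hji.symm _ _
  have leg₂ : ReachOutside (fill Vs) p₁ p₂ := reachOutside_update fun s _ _ =>
    notMem_fill_of_lt_abs hbox (i := i) (by rwa [update_of_ne hki.symm, hp₁i])
  have hp₂j : p₂ j = R + 1 := by simp [p₂, p₁, hjk]
  have leg₃ : ReachOutside (fill Vs) p₂ (update p₂ i (R + 1)) :=
    reachOutside_update fun s _ _ => notMem_fill_of_lt_abs hbox (i := j)
      (by rw [update_of_ne hji, hp₂j, abs_of_nonneg (by omega)]; omega)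
  have hend : update p₂ i (R + 1) = fun _ => R + 1 := by
    funext l
    rcases hcover l with rfl | rfl | rfl
    · simp
    · rw [update_of_ne hji, hp₂j]
    · simp [p₂, hki]
  exact (leg₁.trans leg₂).trans (hend ▸ leg₃)

lemma reachOutside_fill_of_reachOutside {b z : V3} (h : ReachOutside Vs b z) (hb : b ∉ fill Vs) :
    ReachOutside (fill Vs) b z := by
  induction h with
  | refl => exact Relation.ReflTransGen.refl
  | @tail c d hbc hcd ih =>
    have hc : c ∉ fill Vs := fun hc => hb ((mem_fill_iff_of_reachOutside hbc).mpr hc)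
    have hd : d ∉ fill Vs := fun hd => hb ((mem_fill_iff_of_reachOutside (hbc.tail hcd)).mpr hd)
    exact ih.tail ⟨hc, hd, hcd.2.2⟩

lemma reachOutside_fill (hbox : Vs ⊆ box R) (hR : 0 ≤ R) {x y : V3} (hx : x ∉ fill Vs)
    (hy : y ∉ fill Vs) : ReachOutside (fill Vs) x y := by
  have to_corner : ∀ b ∉ fill Vs, ReachOutside (fill Vs) b (fun _ => R + 1) := by
    intro b hb
    have hinf : Set.Infinite {z | ReachOutside Vs b z} := hb
    obtain ⟨z, hz, hzbox⟩ := hinf.exists_notMem_finite (box_finite R)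
    obtain ⟨i, hi⟩ : ∃ i, R < |z i| := by simpa [box] using hzbox
    exact (reachOutside_fill_of_reachOutside hz hb).trans (reachOutside_fill_corner hbox hR hi)
  exact (to_corner x hx).trans (to_corner y hy).symm

end Fill

section OuterBoundary

def outerBoundary (Vs : Set V3) : Set (Set R3) :=
  {P | ∃ a b, a ∈ fill Vs ∧ b ∉ fill Vs ∧ dist1 a b = 1 ∧ P = dualPlq s(a, b)}

variable {Vs : Set V3} {R : ℤ}

lemma dualPlq_mem_outerBoundary_iff {x y : V3} (h : dist1 x y = 1) :
    dualPlq s(x, y) ∈ outerBoundary Vs ↔ ¬(x ∈ fill Vs ↔ y ∈ fill Vs) := by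
  constructor
  · rintro ⟨a, b, ha, hb, hab, heq⟩
    rcases Sym2.eq_iff.mp (dualPlq_inj h hab heq) with ⟨rfl, rfl⟩ | ⟨rfl, rfl⟩ <;> tauto
  · intro hxy
    by_cases hx : x ∈ fill Vs
    · exact ⟨x, y, hx, fun hy => hxy (iff_of_true hx hy), h, rfl⟩
    · exact ⟨y, x, by tauto, hx, by rwa [dist1_comm], by rw [Sym2.eq_swap]⟩

lemma mem_box_of_dualPlq_mem_outerBoundary (hbox : Vs ⊆ box R) {x y : V3} (h : dist1 x y = 1)
    (hP : dualPlq s(x, y) ∈ outerBoundary Vs) : x ∈ box R ∨ y ∈ box R := by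
  rw [dualPlq_mem_outerBoundary_iff h] at hP
  by_cases hx : x ∈ fill Vs
  · exact Or.inl (fill_subset_box hbox hx)
  · exact Or.inr (fill_subset_box hbox (by tauto))

lemma outerBoundary_finite (hbox : Vs ⊆ box R) : (outerBoundary Vs).Finite := by
  refine (((box_finite R).prod (box_finite (R + 1))).image
    fun p : V3 × V3 => dualPlq s(p.1, p.2)).subset ?_
  rintro P ⟨a, b, ha, -, hab, rfl⟩
  refine ⟨(a, b), ⟨fill_subset_box hbox ha, fun i => ?_⟩, rfl⟩
  have h1 := abs_coord_le_of_dist1 a b hab i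
  have h2 := fill_subset_box hbox ha i
  show |b i| ≤ R + 1
  rw [abs_le] at h1 h2 ⊢
  constructor <;> omega

lemma isPlq_of_mem_outerBoundary {P : Set R3} (hP : P ∈ outerBoundary Vs) : IsPlq P := by
  obtain ⟨a, b, -, -, hab, rfl⟩ := hP
  exact ⟨s(a, b), ⟨a, b, rfl, hab⟩, rfl⟩

lemma exists_of_mem_outerBoundary {P : Set R3} (hP : P ∈ outerBoundary Vs) :
    ∃ x y : V3, dist1 x y = 1 ∧ x ∈ Vs ∧ y ∉ Vs ∧ P = dualPlq s(x, y) := by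
  obtain ⟨a, b, ha, hb, hab, rfl⟩ := hP
  exact ⟨a, b, hab, mem_of_mem_fill_of_notMem_fill ha hb hab, fun h => hb (subset_fill h), rfl⟩

end OuterBoundary

section Parity

def crossing (S : Set (Set R3)) (e : EdgeP) : ZMod 2 := if dualPlq e ∈ S then 1 else 0

def columnEdge (x : V3) (n : ℤ) : EdgeP := s(shift x 2 n, shift x 2 (n + 1))

/-- Parity of the number of plaquettes of `S` crossed by the vertical ray upwards from `x`,
provided `S` lies below height `R + 1`. -/
def columnParity (S : Set (Set R3)) (R : ℤ) (x : V3) : ZMod 2 :=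
  ∑ n ∈ Finset.range (R + 1 - x 2).toNat, crossing S (columnEdge x n)

variable {Vs : Set V3} {R : ℤ} {S : Set (Set R3)}

lemma crossing_outerBoundary {x y : V3} (h : dist1 x y = 1) :
    crossing (outerBoundary Vs) s(x, y) = (fill Vs).indicator 1 x + (fill Vs).indicator 1 y := by
  by_cases hx : x ∈ fill Vs <;> by_cases hy : y ∈ fill Vs <;>
    simp [crossing, dualPlq_mem_outerBoundary_iff h, hx, hy, CharTwo.add_self_eq_zero]

lemma crossing_eq_zero_of_lt (hbox : Vs ⊆ box R) (hS : S ⊆ outerBoundary Vs) {x y : V3}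
    (hxy : dist1 x y = 1) (hx : R < x 2) (hy : R < y 2) : crossing S s(x, y) = 0 := by
  refine if_neg fun hmem => ?_
  rcases mem_box_of_dualPlq_mem_outerBoundary hbox hxy (hS hmem) with h | h
  · exact absurd ((le_abs_self _).trans (h 2)) hx.not_ge
  · exact absurd ((le_abs_self _).trans (h 2)) hy.not_ge

lemma crossing_columnEdge_eq_zero (hbox : Vs ⊆ box R) (hS : S ⊆ outerBoundary Vs) {x : V3}
    {n : ℕ} (hn : (R + 1 - x 2).toNat ≤ n) : crossing S (columnEdge x n) = 0 :=
  crossing_eq_zero_of_lt hbox hS (by simp [dist1_shift_shift])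
    (by rw [shift_apply_self]; omega) (by rw [shift_apply_self]; omega)

lemma columnParity_eq_sum (hbox : Vs ⊆ box R) (hS : S ⊆ outerBoundary Vs) (x : V3) {N : ℕ}
    (hN : (R + 1 - x 2).toNat ≤ N) :
    columnParity S R x = ∑ n ∈ Finset.range N, crossing S (columnEdge x n) :=
  Finset.sum_subset (Finset.range_subset_range.mpr hN) fun _ _ hn =>
    crossing_columnEdge_eq_zero hbox hS (not_lt.mp (Finset.mem_range.not.mp hn))

lemma columnParity_add_columnParity_shift_two (hbox : Vs ⊆ box R) (hS : S ⊆ outerBoundary Vs)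
    (x : V3) :
    columnParity S R x + columnParity S R (shift x 2 1) = crossing S s(x, shift x 2 1) := by
  set K := (R + 1 - x 2).toNat
  rw [columnParity_eq_sum hbox hS x (N := K + 1) (by omega), Finset.sum_range_succ',
    columnParity_eq_sum hbox hS (shift x 2 1) (N := K) (by rw [shift_apply_self]; omega)]
  have hcol : ∀ n : ℕ, columnEdge x ((n + 1 : ℕ) : ℤ) = columnEdge (shift x 2 1) n := by
    intro n
    simp only [columnEdge, shift_shift]
    push_cast
    ring_nf
  rw [Finset.sum_congr rfl fun n _ => congrArg (crossing S) (hcol n), add_comm, ← add_assoc,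
    CharTwo.add_self_eq_zero, zero_add]
  simp [columnEdge]

variable (hS : S ⊆ outerBoundary Vs)
  (hclosed : ∀ P ∈ S, ∀ P' ∈ outerBoundary Vs, OneConn P P' → P' ∈ S)
include hS hclosed

lemma crossing_square_sum {u : V3} {a b : Fin 3} (hab : a ≠ b) :
    crossing S s(u, shift u a 1) + crossing S s(shift u b 1, shift (shift u b 1) a 1) +
      crossing S s(u, shift u b 1) + crossing S s(shift u a 1, shift (shift u a 1) b 1) = 0 := by
  by_cases hmeet : ∃ P ∈ squarePlaqs u a b, P ∈ S
  · obtain ⟨P₀, hP₀, hP₀S⟩ := hmeet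
    have hcongr : ∀ e, dualPlq e ∈ squarePlaqs u a b →
        crossing S e = crossing (outerBoundary Vs) e := by
      intro e he
      have hiff : dualPlq e ∈ S ↔ dualPlq e ∈ outerBoundary Vs := by
        refine ⟨fun h => hS h, fun hQ => ?_⟩
        rcases eq_or_oneConn_of_mem_squarePlaqs hab hP₀ he with h | h
        · exact h ▸ hP₀S
        · exact hclosed _ hP₀S _ hQ h
      simp only [crossing, hiff]
    rw [hcongr _ (by simp [squarePlaqs]), hcongr _ (by simp [squarePlaqs]),
      hcongr _ (by simp [squarePlaqs]), hcongr _ (by simp [squarePlaqs]),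
      crossing_outerBoundary (dist1_shift_one _ _), crossing_outerBoundary (dist1_shift_one _ _),
      crossing_outerBoundary (dist1_shift_one _ _), crossing_outerBoundary (dist1_shift_one _ _),
      shift_comm u hab.symm]
    ring_nf
    reduce_mod_char
  · push Not at hmeet
    have hzero : ∀ e, dualPlq e ∈ squarePlaqs u a b → crossing S e = 0 :=
      fun e he => if_neg (hmeet _ he)
    rw [hzero _ (by simp [squarePlaqs]), hzero _ (by simp [squarePlaqs]),
      hzero _ (by simp [squarePlaqs]), hzero _ (by simp [squarePlaqs])]
    norm_num

lemma columnParity_add_columnParity_shift (hbox : Vs ⊆ box R) (x : V3) {j : Fin 3}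
    (hj : j ≠ 2) :
    columnParity S R x + columnParity S R (shift x j 1) = crossing S s(x, shift x j 1) := by
  set f : ℕ → ZMod 2 := fun n => crossing S s(shift x 2 n, shift (shift x j 1) 2 n)
  have hsquare : ∀ n : ℕ,
      crossing S (columnEdge x n) + crossing S (columnEdge (shift x j 1) n) = f (n + 1) - f n := by
    intro n
    have h := crossing_square_sum hS hclosed (u := shift x 2 n) hj
    simp only [shift_shift, shift_comm x hj.symm] at h
    rw [add_assoc, CharTwo.add_eq_zero] at h
    simp only [f, columnEdge, CharTwo.sub_eq_add]
    push_cast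
    rw [← h, add_comm]
  have hfar : f (R + 1 - x 2).toNat = 0 := by
    refine crossing_eq_zero_of_lt hbox hS ?_ (by rw [shift_apply_self]; omega)
      (by rw [shift_apply_self, shift_apply_of_ne _ _ hj.symm]; omega)
    rw [← shift_comm x hj.symm]
    exact dist1_shift_one _ _
  rw [columnParity_eq_sum hbox hS x le_rfl,
    columnParity_eq_sum hbox hS (shift x j 1) (by rw [shift_apply_of_ne _ _ hj.symm]),
    ← Finset.sum_add_distrib, Finset.sum_congr rfl fun n _ => hsquare n, Finset.sum_range_sub,
    hfar, zero_sub, CharTwo.neg_eq]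
  simp [f]

lemma columnParity_add_columnParity_of_dist1 (hbox : Vs ⊆ box R) {x y : V3}
    (hxy : dist1 x y = 1) :
    columnParity S R x + columnParity S R y = crossing S s(x, y) := by
  have hunit : ∀ p j, columnParity S R p + columnParity S R (shift p j 1) =
      crossing S s(p, shift p j 1) := fun p j =>
    if hj : j = 2 then hj ▸ columnParity_add_columnParity_shift_two hbox hS p
    else columnParity_add_columnParity_shift hS hclosed hbox p hj
  obtain ⟨j, rfl | rfl⟩ := exists_eq_shift_of_dist1_eq_one hxy
  · exact hunit x j
  · rw [add_comm, Sym2.eq_swap]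
    exact hunit y j

lemma columnParity_eq_of_reflTransGen (hbox : Vs ⊆ box R) {x y : V3}
    (h : Relation.ReflTransGen
      (fun a b => dist1 a b = 1 ∧ (a ∈ fill Vs ↔ b ∈ fill Vs)) x y) :
    columnParity S R x = columnParity S R y := by
  induction h with
  | refl => rfl
  | @tail c d _ hcd ih =>
    have hcross : crossing S s(c, d) = 0 :=
      if_neg fun hmem => (dualPlq_mem_outerBoundary_iff hcd.1).mp (hS hmem) hcd.2
    have := columnParity_add_columnParity_of_dist1 hS hclosed hbox hcd.1
    rw [hcross, CharTwo.add_eq_zero] at this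
    rw [ih, this]

end Parity

lemma setConn_outerBoundary {Vs : Set V3} {R : ℤ} (hbox : Vs ⊆ box R) (hR : 0 ≤ R)
    (hVconn : ∀ x ∈ Vs, ∀ y ∈ Vs,
      Relation.ReflTransGen (fun a b => a ∈ Vs ∧ b ∈ Vs ∧ dist1 a b = 1) x y) :
    SetConn OneConn (outerBoundary Vs) := by
  intro P hP P' hP'
  by_contra hPP'
  set S := {Q | Q ∈ outerBoundary Vs ∧ Relation.ReflTransGen
    (fun A B => A ∈ outerBoundary Vs ∧ B ∈ outerBoundary Vs ∧ OneConn A B) P Q}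
  have hS : S ⊆ outerBoundary Vs := fun _ h => h.1
  have hclosed : ∀ A ∈ S, ∀ B ∈ outerBoundary Vs, OneConn A B → B ∈ S :=
    fun A hA B hB hAB => ⟨hB, hA.2.tail ⟨hA.1, hB, hAB⟩⟩
  have hPS : P ∈ S := ⟨hP, Relation.ReflTransGen.refl⟩
  obtain ⟨a, b, ha, hb, hab, rfl⟩ := hP
  obtain ⟨c, d, hc, hd, hcd, rfl⟩ := hP'
  have hac : columnParity S R a = columnParity S R c :=
    columnParity_eq_of_reflTransGen hS hclosed hbox <| Relation.ReflTransGen.mono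
      (fun _ _ h => ⟨h.2.2, iff_of_true (subset_fill h.1) (subset_fill h.2.1)⟩) _ _
      (hVconn a (mem_of_mem_fill_of_notMem_fill ha hb hab) c
        (mem_of_mem_fill_of_notMem_fill hc hd hcd))
  have hbd : columnParity S R b = columnParity S R d :=
    columnParity_eq_of_reflTransGen hS hclosed hbox <|
      Relation.ReflTransGen.mono (fun _ _ h => ⟨h.2.2, iff_of_false h.1 h.2.1⟩) _ _
        (reachOutside_fill hbox hR hb hd)
  have hab' := columnParity_add_columnParity_of_dist1 hS hclosed hbox hab
  have hcd' := columnParity_add_columnParity_of_dist1 hS hclosed hbox hcd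
  rw [crossing, if_pos hPS] at hab'
  rw [crossing, if_neg fun h => hPP' h.2] at hcd'
  rw [hac, hbd, hcd'] at hab'
  exact zero_ne_one hab'

section Topology

lemma finite_preimage_toR {S : Set R3} (hS : Bornology.IsBounded S) : (toR ⁻¹' S).Finite := by
  obtain ⟨r, hr⟩ := (Metric.isBounded_iff_subset_closedBall 0).mp hS
  refine (box_finite ⌈r⌉).subset fun x hx i => ?_
  have h : |(x i : ℝ)| ≤ r :=
    (norm_le_pi_norm (toR x) i).trans (mem_closedBall_zero_iff.mp (hr hx))
  have : ((|x i| : ℤ) : ℝ) ≤ (⌈r⌉ : ℝ) := by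
    push_cast
    exact h.trans (Int.le_ceil r)
  exact_mod_cast this

lemma exists_mem_cube (z : R3) : ∃ v : V3, z ∈ cube v :=
  ⟨fun i => round (z i), mem_cube.mpr fun i => by simpa using abs_sub_round (z i)⟩

lemma locallyFinite_cube : LocallyFinite cube := by
  intro z
  refine ⟨Metric.ball z 1, Metric.ball_mem_nhds z one_pos,
    (finite_preimage_toR (Metric.isBounded_closedBall (x := z) (r := 2))).subset ?_⟩
  rintro v ⟨w, hwv, hwz⟩
  rw [mem_preimage, Metric.mem_closedBall]
  calc dist (toR v) z ≤ dist w (toR v) + dist w z := dist_triangle_left _ _ _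
    _ ≤ 1 / 2 + 1 := add_le_add (Metric.mem_closedBall.mp hwv) (Metric.mem_ball.mp hwz).le
    _ ≤ 2 := by norm_num

lemma isClosed_biUnion_cube (T : Set V3) : IsClosed (⋃ v ∈ T, cube v) := by
  rw [biUnion_eq_iUnion]
  exact (locallyFinite_cube.comp_injective Subtype.val_injective).isClosed_iUnion
    fun _ => Metric.isClosed_closedBall

variable {Vs : Set V3}

lemma toR_notMem_sUnion_outerBoundary (w : V3) : toR w ∉ ⋃₀ outerBoundary Vs := by
  rintro ⟨P, ⟨a, b, -, -, hab, rfl⟩, h⟩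
  exact toR_notMem_dualPlq hab w h

/-- Two cubes around a point, one centred in `fill Vs` and one not, are joined through
cubes around the point; some consecutive pair of them straddles the outer boundary. -/
lemma mem_sUnion_outerBoundary_of_mem_cube {z : R3} {u v : V3} (hu : z ∈ cube u)
    (hv : z ∈ cube v) (huV : u ∈ fill Vs) (hvV : v ∉ fill Vs) :
    z ∈ ⋃₀ outerBoundary Vs := by
  obtain ⟨n, hn⟩ : ∃ n : ℕ, dist1 u v = n :=
    ⟨(dist1 u v).toNat, (Int.toNat_of_nonneg (dist1_nonneg u v)).symm⟩
  induction n generalizing u with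
  | zero => exact absurd (eq_of_dist1_eq_zero hn ▸ huV) hvV
  | succ n ih =>
    obtain ⟨u', hstep, hu', hdist⟩ := exists_step_of_mem_cube hu hv fun h => hvV (h ▸ huV)
    by_cases hu'V : u' ∈ fill Vs
    · exact ih hu' hu'V (by push_cast at hn; omega)
    · refine ⟨_, ⟨u, u', huV, hu'V, hstep, rfl⟩, ?_⟩
      rw [dualPlq_eq_cube_inter hstep]
      exact ⟨hu, hu'⟩

lemma toR_mem_insR (hfin : (fill Vs).Finite) {x : V3} (hx : x ∈ fill Vs) :
    toR x ∈ insR (⋃₀ outerBoundary Vs) := by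
  set A := ⋃ v ∈ fill Vs, cube v
  set B := ⋃ v ∈ (fill Vs)ᶜ, cube v
  refine ⟨toR_notMem_sUnion_outerBoundary x, ?_⟩
  have hcover : ∀ z, z ∈ A ∨ z ∈ B := fun z => by
    obtain ⟨v, hv⟩ := exists_mem_cube z
    by_cases hvV : v ∈ fill Vs
    · exact Or.inl (mem_biUnion hvV hv)
    · exact Or.inr (mem_biUnion hvV hv)
  have hsplit : connectedComponentIn (⋃₀ outerBoundary Vs)ᶜ (toR x) ⊆ Bᶜ := by
    refine isPreconnected_connectedComponentIn.subset_left_of_subset_union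
      (isClosed_biUnion_cube _).isOpen_compl (isClosed_biUnion_cube _).isOpen_compl
      (disjoint_left.mpr fun z hB hA => (hcover z).elim hA hB) (fun z hz => ?_)
      ⟨toR x, mem_connectedComponentIn (toR_notMem_sUnion_outerBoundary x), ?_⟩
    · by_contra! h
      simp only [mem_union, mem_compl_iff, not_or, not_not, B, mem_iUnion] at h
      obtain ⟨⟨v, hvV, hv⟩, ⟨u, huV, hu⟩⟩ := h
      exact connectedComponentIn_subset _ _ hz (mem_sUnion_outerBoundary_of_mem_cube hu hv huV hvV)
    · simp only [B, mem_compl_iff, mem_iUnion, toR_mem_cube, not_exists]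
      rintro v hv rfl
      exact hv hx
  refine ((Bornology.isBounded_biUnion hfin).mpr fun v _ => Metric.isBounded_closedBall).subset
    fun z hz => (hcover z).resolve_right (hsplit hz)

lemma segment_subset_compl_sUnion_outerBoundary {u v : V3} (hu : u ∉ Vs) (hv : v ∉ Vs)
    (huv : dist1 u v = 1) : segment ℝ (toR u) (toR v) ⊆ (⋃₀ outerBoundary Vs)ᶜ := by
  rintro z hz ⟨P, ⟨a, b, ha, hb, hab, rfl⟩, hzP⟩
  rw [dualPlq_eq_cube_inter hab] at hzP
  rcases eq_or_eq_of_mem_segment_of_mem_cube huv hz hzP.1 with rfl | rfl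
  · exact hu (mem_of_mem_fill_of_notMem_fill ha hb hab)
  · exact hv (mem_of_mem_fill_of_notMem_fill ha hb hab)

lemma ReachOutside.toR_mem_connectedComponentIn {w z : V3} (h : ReachOutside Vs w z) :
    toR z ∈ connectedComponentIn (⋃₀ outerBoundary Vs)ᶜ (toR w) := by
  induction h with
  | refl => exact mem_connectedComponentIn (toR_notMem_sUnion_outerBoundary w)
  | tail _ hcd ih =>
    rw [connectedComponentIn_eq ih]
    exact (convex_segment _ _).isPreconnected.subset_connectedComponentIn (left_mem_segment ℝ _ _)
      (segment_subset_compl_sUnion_outerBoundary hcd.1 hcd.2.1 hcd.2.2) (right_mem_segment ℝ _ _)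

lemma toR_mem_outR {w : V3} {γ : ℕ → V3} (hγ : Injective γ)
    (hreach : ∀ n, ReachOutside Vs w (γ n)) : toR w ∈ outR (⋃₀ outerBoundary Vs) :=
  ⟨toR_notMem_sUnion_outerBoundary w, fun hbdd => infinite_of_injective_forall_mem hγ
    (fun n => (hreach n).toR_mem_connectedComponentIn) (finite_preimage_toR hbdd)⟩

end Topology

end SplittingSet

open SplittingSet in
/-- existence of a splitting set of plaquettes around a finite
connected subgraph of the lattice. -/
theorem statement5 (V : Set V3) (E : Set EdgeP) (hfin : V.Finite) (hne : V.Nonempty)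
    (hE : ∀ e ∈ E, IsLatticeEdge e ∧ ∀ x ∈ e, x ∈ V)
    (hconn : ∀ x ∈ V, ∀ y ∈ V, Relation.ReflTransGen (fun a b => s(a, b) ∈ E) x y) :
    ∃ Q : Set (Set R3), IsSplitting Q ∧
      (∀ x ∈ V, toR x ∈ insR (⋃₀ Q)) ∧
      (∀ P ∈ Q, ∃ x y : V3, dist1 x y = 1 ∧ x ∈ V ∧ y ∉ V ∧ P = dualPlq s(x, y)) ∧
      (∀ W : Set V3,
        (∀ a ∈ W, ∀ b ∈ W,
          Relation.ReflTransGen (fun u v => u ∈ W ∧ v ∈ W ∧ dist1 u v = 1) a b) →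
        V ∩ W = ∅ →
        (∃ γ : ℕ → V3, γ 0 ∈ W ∧ (∀ n, dist1 (γ n) (γ (n + 1)) = 1) ∧
          Function.Injective γ ∧ ∀ n, γ n ∉ V) →
        ∀ w ∈ W, toR w ∈ outR (⋃₀ Q)) := by
  obtain ⟨R, hR, hbox⟩ := exists_subset_box hfin
  have hfill : (fill V).Finite := (box_finite R).subset (fill_subset_box hbox)
  have hVconn : ∀ x ∈ V, ∀ y ∈ V,
      Relation.ReflTransGen (fun a b => a ∈ V ∧ b ∈ V ∧ dist1 a b = 1) x y :=
    fun x hx y hy => Relation.ReflTransGen.mono (fun a b hab =>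
      ⟨(hE _ hab).2 a (Sym2.mem_mk_left a b), (hE _ hab).2 b (Sym2.mem_mk_right a b),
        dist1_of_isLatticeEdge (hE _ hab).1⟩) _ _ (hconn x hx y hy)
  have hins : ∀ x ∈ V, toR x ∈ insR (⋃₀ outerBoundary V) :=
    fun x hx => toR_mem_insR hfill (subset_fill hx)
  refine ⟨outerBoundary V, ⟨outerBoundary_finite hbox, fun _ => isPlq_of_mem_outerBoundary,
      setConn_outerBoundary hbox hR hVconn, ⟨_, hins _ hne.some_mem⟩⟩,
    hins, fun _ => exists_of_mem_outerBoundary, ?_⟩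
  rintro W hW hWV ⟨γ, hγ0, hγ, hinj, hγV⟩ w hw
  have hWout : ∀ a ∈ W, a ∉ V := fun a ha haV => Set.notMem_empty a (hWV.subset ⟨haV, ha⟩)
  have hw0 : ReachOutside V w (γ 0) := Relation.ReflTransGen.mono
    (fun a b h => ⟨hWout a h.1, hWout b h.2.1, h.2.2⟩) _ _ (hW w hw (γ 0) hγ0)
  refine toR_mem_outR hinj fun n => ?_
  induction n with
  | zero => exact hw0
  | succ n ih => exact ih.tail ⟨hγV n, hγV (n + 1), hγ n⟩

end
end
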